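/- arXiv:2008.10035 — 2 statements merged into one kernel-verified Lean document; each statement's English description precedes it below -/
import Mathlib

section
/- The pure virtual twin group PVT_n has the presentation with generators λ_{i,j} for 1 ≤ i < j ≤ n and defining relations λ_{i,j}λ_{k,l} = λ_{k,l}λ_{i,j} whenever i, j, k, l are four distinct integers. In particular, PVT_n is a right-angled Artin group. -/
namespace VTG

open scoped commutatorElement

abbrev Gen (n : ℕ) := Fin (n-1) ⊕ Fin (n-1)

/-- The free-group letter corresponding to the generator `s_i`. -/
def fs {n : ℕ} (i : Fin (n-1)) : FreeGroup (Gen n) := FreeGroup.of (Sum.inl i)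

/-- The free-group letter corresponding to the generator `ρ_i`. -/
def fr {n : ℕ} (i : Fin (n-1)) : FreeGroup (Gen n) := FreeGroup.of (Sum.inr i)

/-- The defining relations of the virtual twin group `VT_n`. -/
def vtRels (n : ℕ) : Set (FreeGroup (Gen n)) :=
  { w | (∃ i : Fin (n-1), w = fs i * fs i) ∨
        (∃ i j : Fin (n-1), (i : ℕ) + 2 ≤ (j : ℕ) ∧ w = ⁅fs i, fs j⁆) ∨
        (∃ i : Fin (n-1), w = fr i * fr i) ∨
        (∃ i j : Fin (n-1), (i : ℕ) + 2 ≤ (j : ℕ) ∧ w = ⁅fr i, fr j⁆) ∨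
        (∃ i j : Fin (n-1), (j : ℕ) = (i : ℕ) + 1 ∧
          w = fr i * fr j * fr i * (fr j * fr i * fr j)⁻¹) ∨
        (∃ i j : Fin (n-1), (i : ℕ) + 2 ≤ (j : ℕ) ∧ (w = ⁅fr i, fs j⁆ ∨ w = ⁅fs i, fr j⁆)) ∨
        (∃ i j : Fin (n-1), (j : ℕ) = (i : ℕ) + 1 ∧
          w = fr i * fr j * fs i * (fs j * fr i * fr j)⁻¹) }

/-- The virtual twin group `VT_n`. -/
abbrev VT (n : ℕ) := PresentedGroup (vtRels n)

/-- The generator `s_{k+1}` (1-based numbering) of `VT_n`. -/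
def sg {n : ℕ} (k : ℕ) (h : k < n - 1) : VT n := PresentedGroup.of (Sum.inl ⟨k, h⟩)

/-- The generator `ρ_{k+1}` (1-based numbering) of `VT_n`. -/
def rg {n : ℕ} (k : ℕ) (h : k < n - 1) : VT n := PresentedGroup.of (Sum.inr ⟨k, h⟩)

/-- The transposition `(i, i+1)` in the symmetric group on `n` letters. -/
def tr {n : ℕ} (i : Fin (n - 1)) : Equiv.Perm (Fin n) :=
  Equiv.swap ⟨i.1, by have := i.2; omega⟩ ⟨i.1 + 1, by have := i.2; omega⟩

lemma swap_commute {α : Type*} [DecidableEq α] {a b c d : α}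
    (h1 : a ≠ c) (h2 : a ≠ d) (h3 : b ≠ c) (h4 : b ≠ d) :
    Commute (Equiv.swap a b) (Equiv.swap c d) := by
  apply Equiv.Perm.Disjoint.commute
  intro x
  by_cases hxa : x = a
  · subst hxa; right; exact Equiv.swap_apply_of_ne_of_ne h1 h2
  · by_cases hxb : x = b
    · subst hxb; right; exact Equiv.swap_apply_of_ne_of_ne h3 h4
    · left; exact Equiv.swap_apply_of_ne_of_ne hxa hxb

lemma tr_commute {n : ℕ} {i j : Fin (n-1)} (h : (i : ℕ) + 2 ≤ (j : ℕ)) :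
    Commute (tr (n := n) i) (tr j) := by
  apply swap_commute <;>
    (intro hEq; apply_fun Fin.val at hEq; simp only [] at hEq; omega)

lemma tr_braid {n : ℕ} {i j : Fin (n-1)} (h : (j : ℕ) = (i : ℕ) + 1) :
    tr (n := n) i * tr j * tr i = tr j * tr i * tr j := by
  have hj2 : (i : ℕ) + 2 ≤ n := by have := j.2; omega
  set a : Fin n := ⟨i.1, by omega⟩ with ha
  set b : Fin n := ⟨i.1 + 1, by omega⟩ with hb
  set c : Fin n := ⟨i.1 + 2, by omega⟩ with hc
  have hab : a ≠ b := by simp [ha, hb, Fin.ext_iff]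
  have hbc : b ≠ c := by simp [hb, hc, Fin.ext_iff]
  have hac : a ≠ c := by simp [ha, hc, Fin.ext_iff]
  have h1 : tr (n := n) i = Equiv.swap a b := rfl
  have h2 : tr (n := n) j = Equiv.swap b c := by
    unfold tr
    congr 1 <;> exact Fin.ext (by simp [hb, hc, h])
  rw [h1, h2]
  have L := Equiv.swap_mul_swap_mul_swap (x := c) (y := b) (z := a)
    (hbc.symm) (hac.symm)
  have R := Equiv.swap_mul_swap_mul_swap (x := a) (y := b) (z := c)
    (hab) (hac)
  calc Equiv.swap a b * Equiv.swap b c * Equiv.swap a b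
      = Equiv.swap b a * Equiv.swap c b * Equiv.swap b a := by
        rw [Equiv.swap_comm a b, Equiv.swap_comm b c]
    _ = Equiv.swap a c := L
    _ = Equiv.swap c a := Equiv.swap_comm a c
    _ = Equiv.swap b c * Equiv.swap a b * Equiv.swap b c := R.symm

lemma tr_sq {n : ℕ} (i : Fin (n-1)) : tr (n := n) i * tr i = 1 := Equiv.swap_mul_self _ _

/-- The canonical projection `π : VT_n → S_n`. -/
def perm (n : ℕ) : VT n →* Equiv.Perm (Fin n) :=
  PresentedGroup.toGroup (f := Sum.elim tr tr) (by
    rintro w (⟨i, rfl⟩ | ⟨i, j, hij, rfl⟩ | ⟨i, rfl⟩ | ⟨i, j, hij, rfl⟩ |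
      ⟨i, j, hij, rfl⟩ | ⟨i, j, hij, (rfl | rfl)⟩ | ⟨i, j, hij, rfl⟩)
    · simp [fs, tr_sq]
    · rw [map_commutatorElement]
      simp only [fs, FreeGroup.lift_apply_of, Sum.elim_inl]
      exact commutatorElement_eq_one_iff_commute.mpr (tr_commute hij)
    · simp [fr, tr_sq]
    · rw [map_commutatorElement]
      simp only [fr, FreeGroup.lift_apply_of, Sum.elim_inr]
      exact commutatorElement_eq_one_iff_commute.mpr (tr_commute hij)
    · have h1 : FreeGroup.lift (Sum.elim tr tr) (fr i * fr j * fr (n := n) i)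
          = tr i * tr j * tr i := by simp [fr]
      have h2 : FreeGroup.lift (Sum.elim tr tr) (fr j * fr i * fr (n := n) j)
          = tr j * tr i * tr j := by simp [fr]
      rw [map_mul, map_inv, h1, h2, tr_braid hij, mul_inv_cancel]
    · rw [map_commutatorElement]
      simp only [fr, fs, FreeGroup.lift_apply_of, Sum.elim_inl, Sum.elim_inr]
      exact commutatorElement_eq_one_iff_commute.mpr (tr_commute hij)
    · rw [map_commutatorElement]
      simp only [fr, fs, FreeGroup.lift_apply_of, Sum.elim_inl, Sum.elim_inr]
      exact commutatorElement_eq_one_iff_commute.mpr (tr_commute hij)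
    · have h1 : FreeGroup.lift (Sum.elim tr tr) (fr i * fr j * fs (n := n) i)
          = tr i * tr j * tr i := by simp [fr, fs]
      have h2 : FreeGroup.lift (Sum.elim tr tr) (fs j * fr i * fr (n := n) j)
          = tr j * tr i * tr j := by simp [fr, fs]
      rw [map_mul, map_inv, h1, h2, tr_braid hij, mul_inv_cancel])


/-- Vertices `λ_{i,j}`, `1 ≤ i < j ≤ n`, indexed by pairs of `Fin n`. -/
abbrev Vtx (n : ℕ) := {p : Fin n × Fin n // p.1 < p.2}

/-- Two vertices `λ_{i,j}` and `λ_{k,l}` have disjoint index sets, i.e. `i,j,k,l` are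
four distinct integers. -/
abbrev DisjV {n : ℕ} (p q : Vtx n) : Prop :=
  p.1.1 ≠ q.1.1 ∧ p.1.1 ≠ q.1.2 ∧ p.1.2 ≠ q.1.1 ∧ p.1.2 ≠ q.1.2

/-- The right-angled Artin relations for `PVT_n`: the generators `λ_{i,j}` and `λ_{k,l}`
commute whenever `i, j, k, l` are four distinct integers. -/
def raagRels (n : ℕ) : Set (FreeGroup (Vtx n)) :=
  { w | ∃ p q : Vtx n, DisjV p q ∧ w = ⁅FreeGroup.of p, FreeGroup.of q⁆ }

/-- The element `λ_{a+1,b+1} = ρ_{b}⋯ρ_{a+2}(s_{a+1}ρ_{a+1})ρ_{a+2}⋯ρ_{b}` of `VT n`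
(paper indices are 1-based; here `a,b` are 0-based strand indices with `a < b < n`). -/
def lamN {n : ℕ} : ℕ → ℕ → VT n
  | a, b =>
    if h : a < b ∧ b < n then
      if hb : b = a + 1 then sg a (by omega) * rg a (by omega)
      else rg (b - 1) (by omega) * lamN a (b - 1) * rg (b - 1) (by omega)
    else 1
  termination_by a b => b
  decreasing_by omega

/-- The generator `λ_{i,j}` of `PVT_n`, as an element of `VT n`. -/
def lam {n : ℕ} (p : Vtx n) : VT n := lamN p.1.1.1 p.1.2.1

/-!
Write `A` for the right-angled Artin group on the `λ_{i,j}`, with `λ_{j,i} = λ_{i,j}⁻¹`; `S_n`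
acts on it by permuting indices.

The relations of `VT_n` give `ρ_k λ_{a,b} ρ_k = λ_{τ a, τ b}` for `τ = (k, k+1)`. The `ρ_k`
satisfy the Coxeter relations of type `A_{n-1}`, and the Coxeter group of that type has at most
`n!` elements (normal forms), so it is `S_n`: there is a homomorphism `S_n → VT_n`,
`(k, k+1) ↦ ρ_k`, through which conjugation permutes the `λ`'s. Moving two disjoint pairs to
`{1,2}` and `{3,4}` shows that the corresponding `λ`'s commute, as `s_1ρ_1` and `s_3ρ_3` do; so
`λ_{i,j} ↦ λ_{i,j}` defines `ψ : A → VT_n`.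

Conversely `s_k ↦ (λ_{k,k+1}, τ_k)`, `ρ_k ↦ (1, τ_k)` defines `φ : VT_n → A ⋊ S_n` lying over `π`.
Since `φ ∘ ψ` is the inclusion of `A`, `ψ` is injective; since `(a, σ) ↦ ψ(a) σ` is a left inverse
of `φ`, every element of `ker π` is `ψ` of the first component of its image.
-/

section GroupLemmas

lemma commute_of_commutatorElement_mem {α : Type*} {rels : Set (FreeGroup α)} {a b : α}
    (h : ⁅FreeGroup.of a, FreeGroup.of b⁆ ∈ rels) :
    Commute (PresentedGroup.of (rels := rels) a) (PresentedGroup.of b) := by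
  have h1 := PresentedGroup.one_of_mem h
  rw [map_commutatorElement] at h1
  exact commutatorElement_eq_one_iff_commute.mp h1

variable {G : Type*} [Group G]

lemma lift_commutatorElement_eq_one {α : Type*} {f : α → G} {a b : α}
    (h : Commute (f a) (f b)) : FreeGroup.lift f ⁅FreeGroup.of a, FreeGroup.of b⁆ = 1 := by
  rw [map_commutatorElement, FreeGroup.lift_apply_of, FreeGroup.lift_apply_of,
    commutatorElement_eq_one_iff_commute]
  exact h

lemma conj_conj_of_commute {r t x : G} (h : Commute r t) :
    r * (t * x * t) * r = t * (r * x * r) * t := by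
  simp only [← mul_assoc, h.eq]
  simp only [mul_assoc, h.eq]

lemma conj_conj_of_mul_self {r : G} (hr : r * r = 1) (x : G) : r * (r * x * r) * r = x := by
  rw [← mul_assoc, ← mul_assoc, hr, one_mul, mul_assoc, hr, mul_one]

lemma commute_conj_of_braid {w x y : G} (hw : w * w = 1) (hx : x * x = 1)
    (hb : w * x * w = x * w * x) (hy : Commute x y) :
    Commute w (x * (w * y * w) * x) := by
  have hxy : x * y * x = y := by rw [hy.eq, mul_assoc, hx, mul_one]
  have key : w * (x * (w * y * w) * x) * w = x * (w * y * w) * x :=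
    calc w * (x * (w * y * w) * x) * w = (w * x * w) * y * (w * x * w) := by group
      _ = x * w * (x * y * x) * w * x := by rw [hb]; group
      _ = x * (w * y * w) * x := by rw [hxy]; group
  calc w * (x * (w * y * w) * x) = w * (x * (w * y * w) * x) * w * w := by
        rw [mul_assoc _ w w, hw, mul_one]
    _ = x * (w * y * w) * x * w := by rw [key]

end GroupLemmas

section CoxeterPresentation

def coxRels (n : ℕ) : Set (FreeGroup (Fin (n - 1))) :=
  {w | (∃ i : Fin (n - 1), w = .of i * .of i) ∨
    (∃ i j : Fin (n - 1), (i : ℕ) + 2 ≤ j ∧ w = ⁅FreeGroup.of i, FreeGroup.of j⁆) ∨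
    (∃ i j : Fin (n - 1), (j : ℕ) = i + 1 ∧
      w = .of i * .of j * .of i * (.of j * .of i * .of j)⁻¹)}

abbrev CoxA (n : ℕ) := PresentedGroup (coxRels n)

variable {n : ℕ}

/-- Extended by `1` for `k ≥ n - 1`, so that no bound proofs need to be carried around. -/
def coxGen (k : ℕ) : CoxA n := if h : k < n - 1 then PresentedGroup.of ⟨k, h⟩ else 1

lemma mk_of_eq_coxGen (i : Fin (n - 1)) :
    PresentedGroup.mk (coxRels n) (FreeGroup.of i) = coxGen i := by
  rw [coxGen, dif_pos i.2]; rfl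

lemma coxGen_mul_self (k : ℕ) : coxGen (n := n) k * coxGen k = 1 := by
  unfold coxGen
  split_ifs with h
  · exact PresentedGroup.one_of_mem (Or.inl ⟨⟨k, h⟩, rfl⟩)
  · exact mul_one 1

lemma coxGen_inv (k : ℕ) : (coxGen (n := n) k)⁻¹ = coxGen k :=
  inv_eq_of_mul_eq_one_right (coxGen_mul_self k)

lemma coxA_of_inv (i : Fin (n - 1)) : (PresentedGroup.of i : CoxA n)⁻¹ = PresentedGroup.of i :=
  inv_eq_of_mul_eq_one_right (PresentedGroup.one_of_mem (Or.inl ⟨i, rfl⟩))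

lemma commute_coxGen {i j : ℕ} (h : i + 2 ≤ j) : Commute (coxGen (n := n) i) (coxGen j) := by
  unfold coxGen
  split_ifs with hi hj
  · exact commute_of_commutatorElement_mem (Or.inr (Or.inl ⟨⟨i, hi⟩, ⟨j, hj⟩, h, rfl⟩))
  all_goals simp

lemma coxGen_braid {i : ℕ} (h : i + 1 < n - 1) :
    coxGen (n := n) i * coxGen (i + 1) * coxGen i
      = coxGen (i + 1) * coxGen i * coxGen (i + 1) := by
  simpa only [map_mul, mk_of_eq_coxGen] using PresentedGroup.mk_eq_mk_of_mul_inv_mem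
    (rels := coxRels n) (Or.inr (Or.inr ⟨⟨i, by omega⟩, ⟨i + 1, h⟩, rfl, rfl⟩))

/-- `coxDesc m d = g_m g_{m-1} ⋯ g_{m-d+1}`. For `d ≤ m + 1` these are right coset
representatives of `⟨g_0, …, g_{m-1}⟩` in `⟨g_0, …, g_m⟩`, whence `|CoxA n| ≤ n!`. -/
def coxDesc (m : ℕ) : ℕ → CoxA n
  | 0 => 1
  | d + 1 => coxDesc m d * coxGen (m - d)

lemma commute_coxGen_coxDesc {t m d : ℕ} (h : t + d + 1 ≤ m) :
    Commute (coxGen (n := n) t) (coxDesc m d) := by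
  induction d with
  | zero => exact Commute.one_right _
  | succ d ih => exact (ih (by omega)).mul_right (commute_coxGen (by omega))

lemma coxDesc_mul_coxGen {u m d : ℕ} (hd : m + 1 ≤ u + d) (hdm : d ≤ m + 1) (hu : u + 1 ≤ m)
    (hm : m < n - 1) : coxDesc (n := n) m d * coxGen (u + 1) = coxGen u * coxDesc m d := by
  induction d with
  | zero => omega
  | succ d ih =>
    rw [coxDesc]
    rcases Nat.lt_or_ge (m - d) u with hlt | hge
    · rw [mul_assoc, (commute_coxGen (i := m - d) (j := u + 1) (by omega)).eq, ← mul_assoc,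
        ih (by omega) (by omega), mul_assoc]
    · obtain ⟨e, rfl⟩ : ∃ e, d = e + 1 := ⟨d - 1, by omega⟩
      have hu' : m - (e + 1) = u := by omega
      have hu1 : m - e = u + 1 := by omega
      rw [coxDesc, hu', hu1]
      calc coxDesc m e * coxGen (u + 1) * coxGen u * coxGen (u + 1)
          = coxDesc m e * (coxGen u * coxGen (u + 1) * coxGen u) := by
            rw [coxGen_braid (i := u) (by omega)]; group
        _ = coxGen u * (coxDesc m e * coxGen (u + 1) * coxGen u) := by
            rw [← mul_assoc, ← mul_assoc, ← (commute_coxGen_coxDesc (t := u) (by omega)).eq]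
            group

def coxLower (m : ℕ) : Subgroup (CoxA n) := Subgroup.closure (coxGen '' Set.Iio m)

lemma coxGen_mem_coxLower {t m : ℕ} (h : t < m) : coxGen t ∈ coxLower (n := n) m :=
  Subgroup.subset_closure ⟨t, h, rfl⟩

lemma exists_coxDesc_mul_coxGen {m d t : ℕ} {y : CoxA n} (hm : m < n - 1)
    (hy : y ∈ coxLower m) (hd : d ≤ m + 1) (ht : t ≤ m) :
    ∃ y' ∈ coxLower m, ∃ d' ≤ m + 1, y * coxDesc m d * coxGen t = y' * coxDesc m d' := by
  rcases lt_trichotomy (t + d) m with hlt | heq | hgt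
  · refine ⟨y * coxGen t, mul_mem hy (coxGen_mem_coxLower (by omega)), d, hd, ?_⟩
    rw [mul_assoc, ← (commute_coxGen_coxDesc (by omega)).eq, ← mul_assoc]
  · refine ⟨y, hy, d + 1, by omega, ?_⟩
    rw [mul_assoc, coxDesc, show m - d = t by omega]
  rcases Nat.lt_or_ge (t + d) (m + 2) with hd1 | hd2
  · obtain ⟨e, rfl⟩ : ∃ e, d = e + 1 := ⟨d - 1, by omega⟩
    refine ⟨y, hy, e, by omega, ?_⟩
    rw [coxDesc, show m - e = t by omega, mul_assoc, mul_assoc, coxGen_mul_self, mul_one]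
  · obtain ⟨u, rfl⟩ : ∃ u, t = u + 1 := ⟨t - 1, by omega⟩
    refine ⟨y * coxGen u, mul_mem hy (coxGen_mem_coxLower (by omega)), d, hd, ?_⟩
    rw [mul_assoc, coxDesc_mul_coxGen (by omega) hd (by omega) hm, ← mul_assoc]

lemma exists_coxDesc_of_mem_coxLower_succ {m : ℕ} (hm : m < n - 1) {x : CoxA n}
    (hx : x ∈ coxLower (m + 1)) : ∃ y ∈ coxLower m, ∃ d ≤ m + 1, x = y * coxDesc m d := by
  induction hx using Subgroup.closure_induction_right with
  | one => exact ⟨1, one_mem _, 0, by omega, by simp [coxDesc]⟩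
  | mul_right x _ g hg ih =>
    obtain ⟨t, ht, rfl⟩ := hg
    obtain ⟨y, hy, d, hd, rfl⟩ := ih
    exact exists_coxDesc_mul_coxGen hm hy hd (Nat.lt_succ_iff.mp ht)
  | mul_inv_cancel x _ g hg ih =>
    obtain ⟨t, ht, rfl⟩ := hg
    obtain ⟨y, hy, d, hd, rfl⟩ := ih
    rw [coxGen_inv]
    exact exists_coxDesc_mul_coxGen hm hy hd (Nat.lt_succ_iff.mp ht)

lemma exists_finset_coxLower {m : ℕ} (hm : m ≤ n - 1) :
    ∃ s : Finset (CoxA n), s.card ≤ (m + 1).factorial ∧ ∀ x ∈ coxLower m, x ∈ s := by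
  classical
  induction m with
  | zero =>
    refine ⟨{1}, by simp, fun x hx => ?_⟩
    simpa [coxLower] using hx
  | succ m ih =>
    obtain ⟨s, hs, hsx⟩ := ih (by omega)
    refine ⟨(s ×ˢ Finset.range (m + 2)).image (fun p => p.1 * coxDesc m p.2), ?_, ?_⟩
    · calc _ ≤ (s ×ˢ Finset.range (m + 2)).card := Finset.card_image_le
        _ ≤ (m + 1).factorial * (m + 2) := by rw [Finset.card_product, Finset.card_range]; gcongr
        _ = (m + 2).factorial := by rw [Nat.factorial_succ (m + 1)]; ring
    · intro x hx
      obtain ⟨y, hy, d, hd, rfl⟩ := exists_coxDesc_of_mem_coxLower_succ (by omega) hx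
      exact Finset.mem_image.mpr ⟨(y, d), Finset.mem_product.mpr
        ⟨hsx y hy, Finset.mem_range.mpr (by omega)⟩, rfl⟩

lemma coxLower_eq_top : coxLower (n := n) (n - 1) = ⊤ := by
  rw [eq_top_iff, ← PresentedGroup.closure_range_of, coxLower]
  refine Subgroup.closure_mono ?_
  rintro _ ⟨i, rfl⟩
  exact ⟨i, i.2, (mk_of_eq_coxGen i).symm⟩

lemma exists_surjective_finset_coxA : ∃ s : Finset (CoxA n),
    s.card ≤ n.factorial ∧ Function.Surjective (fun x : s => (x : CoxA n)) := by
  obtain ⟨s, hs, hsx⟩ := exists_finset_coxLower (n := n) le_rfl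
  refine ⟨s, ?_, fun x => ⟨⟨x, hsx x (coxLower_eq_top ▸ Subgroup.mem_top x)⟩, rfl⟩⟩
  rcases n with _ | n <;> simpa using hs

instance : Finite (CoxA n) :=
  have ⟨_, _, hsurj⟩ := exists_surjective_finset_coxA (n := n)
  Finite.of_surjective _ hsurj

lemma card_coxA_le : Nat.card (CoxA n) ≤ n.factorial := by
  obtain ⟨s, hs, hsurj⟩ := exists_surjective_finset_coxA (n := n)
  exact (Nat.card_le_card_of_surjective _ hsurj).trans (by simpa using hs)

lemma closure_range_tr (n : ℕ) : Subgroup.closure (Set.range (tr (n := n))) = ⊤ := by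
  rcases n with _ | m
  · exact Subsingleton.elim _ _
  · refine eq_top_iff.mpr fun σ _ => ?_
    have hσ : σ ∈ Submonoid.closure (Set.range fun i : Fin m => Equiv.swap i.castSucc i.succ) :=
      Equiv.Perm.mclosure_swap_castSucc_succ m ▸ Submonoid.mem_top σ
    exact Submonoid.closure_le.mpr Subgroup.subset_closure hσ

def coxPerm (n : ℕ) : CoxA n →* Equiv.Perm (Fin n) :=
  PresentedGroup.toGroup (f := tr) <| by
    rintro w (⟨i, rfl⟩ | ⟨i, j, hij, rfl⟩ | ⟨i, j, hij, rfl⟩)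
    · simp [tr_sq]
    · exact lift_commutatorElement_eq_one (tr_commute hij)
    · simp [tr_braid hij]

lemma coxPerm_of (i : Fin (n - 1)) : coxPerm n (PresentedGroup.of i) = tr i :=
  PresentedGroup.toGroup.of _

lemma coxPerm_surjective : Function.Surjective (coxPerm n) := by
  rw [← MonoidHom.range_eq_top, MonoidHom.range_eq_map, ← PresentedGroup.closure_range_of,
    MonoidHom.map_closure, ← Set.range_comp]
  convert closure_range_tr n
  exact funext coxPerm_of

noncomputable def coxEquiv (n : ℕ) : CoxA n ≃* Equiv.Perm (Fin n) :=
  MulEquiv.ofBijective (coxPerm n) <| coxPerm_surjective.bijective_of_nat_card_le <| by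
    rw [Nat.card_perm, Nat.card_fin]; exact card_coxA_le

end CoxeterPresentation

section Generators

variable {n : ℕ}

/-- Total versions of `sg k` and `rg k`, i.e. of `s_{k+1}` and `ρ_{k+1}`: `1` for `k ≥ n - 1`. -/
def sig (k : ℕ) : VT n := if h : k < n - 1 then sg k h else 1

def rho (k : ℕ) : VT n := if h : k < n - 1 then rg k h else 1

lemma sg_eq_sig {k : ℕ} (h : k < n - 1) : sg k h = sig (n := n) k := (dif_pos h).symm

lemma rg_eq_rho {k : ℕ} (h : k < n - 1) : rg k h = rho (n := n) k := (dif_pos h).symm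

lemma mk_fs (i : Fin (n - 1)) : PresentedGroup.mk (vtRels n) (fs i) = sig i := sg_eq_sig i.2

lemma mk_fr (i : Fin (n - 1)) : PresentedGroup.mk (vtRels n) (fr i) = rho i := rg_eq_rho i.2

lemma sig_mul_self (k : ℕ) : sig (n := n) k * sig k = 1 := by
  unfold sig
  split_ifs with h
  · exact PresentedGroup.one_of_mem (Or.inl ⟨⟨k, h⟩, rfl⟩)
  · exact mul_one 1

lemma rho_mul_self (k : ℕ) : rho (n := n) k * rho k = 1 := by
  unfold rho
  split_ifs with h
  · exact PresentedGroup.one_of_mem (Or.inr (Or.inr (Or.inl ⟨⟨k, h⟩, rfl⟩)))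
  · exact mul_one 1

lemma sig_inv (k : ℕ) : (sig (n := n) k)⁻¹ = sig k :=
  inv_eq_of_mul_eq_one_right (sig_mul_self k)

lemma rho_inv (k : ℕ) : (rho (n := n) k)⁻¹ = rho k :=
  inv_eq_of_mul_eq_one_right (rho_mul_self k)

lemma commute_sig_sig {i j : ℕ} (h : i + 2 ≤ j) : Commute (sig (n := n) i) (sig j) := by
  unfold sig
  split_ifs with hi hj
  · exact commute_of_commutatorElement_mem (Or.inr (Or.inl ⟨⟨i, hi⟩, ⟨j, hj⟩, h, rfl⟩))
  all_goals simp

lemma commute_rho_rho {i j : ℕ} (h : i + 2 ≤ j) : Commute (rho (n := n) i) (rho j) := by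
  unfold rho
  split_ifs with hi hj
  · exact commute_of_commutatorElement_mem
      (Or.inr (Or.inr (Or.inr (Or.inl ⟨⟨i, hi⟩, ⟨j, hj⟩, h, rfl⟩))))
  all_goals simp

lemma commute_rho_sig {i j : ℕ} (h : i + 2 ≤ j) : Commute (rho (n := n) i) (sig j) := by
  unfold rho sig
  split_ifs with hi hj
  · exact commute_of_commutatorElement_mem <|
      .inr <| .inr <| .inr <| .inr <| .inr <| .inl ⟨⟨i, hi⟩, ⟨j, hj⟩, h, .inl rfl⟩
  all_goals simp

lemma commute_sig_rho {i j : ℕ} (h : i + 2 ≤ j) : Commute (sig (n := n) i) (rho j) := by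
  unfold rho sig
  split_ifs with hi hj
  · exact commute_of_commutatorElement_mem <|
      .inr <| .inr <| .inr <| .inr <| .inr <| .inl ⟨⟨i, hi⟩, ⟨j, hj⟩, h, .inr rfl⟩
  all_goals simp

lemma commute_rho_rho_of_ne {i j : ℕ} (h : i + 2 ≤ j ∨ j + 2 ≤ i) :
    Commute (rho (n := n) i) (rho j) :=
  h.elim commute_rho_rho fun h => (commute_rho_rho h).symm

lemma rho_braid {i : ℕ} (h : i + 1 < n - 1) :
    rho (n := n) i * rho (i + 1) * rho i = rho (i + 1) * rho i * rho (i + 1) := by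
  simpa only [map_mul, mk_fr] using PresentedGroup.mk_eq_mk_of_mul_inv_mem (rels := vtRels n)
    (Or.inr (Or.inr (Or.inr (Or.inr (Or.inl ⟨⟨i, by omega⟩, ⟨i + 1, h⟩, rfl, rfl⟩)))))

lemma rho_rho_sig {i : ℕ} (h : i + 1 < n - 1) :
    rho (n := n) i * rho (i + 1) * sig i = sig (i + 1) * rho i * rho (i + 1) := by
  simpa only [map_mul, mk_fr, mk_fs] using PresentedGroup.mk_eq_mk_of_mul_inv_mem
    (rels := vtRels n)
    (.inr <| .inr <| .inr <| .inr <| .inr <| .inr ⟨⟨i, by omega⟩, ⟨i + 1, h⟩, rfl, rfl⟩)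

lemma lamN_of_not_lt {a b : ℕ} (h : ¬(a < b ∧ b < n)) : lamN (n := n) a b = 1 := by
  rw [lamN, dif_neg h]

lemma lamN_succ_self {a : ℕ} (h : a + 1 < n) : lamN (n := n) a (a + 1) = sig a * rho a := by
  rw [lamN, dif_pos ⟨a.lt_succ_self, h⟩, dif_pos rfl, sg_eq_sig, rg_eq_rho]

lemma lamN_succ {a b : ℕ} (hab : a < b) (hb : b + 1 < n) :
    lamN (n := n) a (b + 1) = rho b * lamN a b * rho b := by
  rw [lamN, dif_pos ⟨by omega, hb⟩, dif_neg (by omega), rg_eq_rho]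
  simp only [Nat.add_sub_cancel]

end Generators

section RhoConjugation

variable {n : ℕ}

lemma rho_conj_rho_conj (k : ℕ) (x : VT n) : rho k * (rho k * x * rho k) * rho k = x :=
  conj_conj_of_mul_self (rho_mul_self k) x

lemma commute_rho_lamN {k a b : ℕ} (hab : a < b) (ha : a ≠ k ∧ a ≠ k + 1)
    (hb : b ≠ k ∧ b ≠ k + 1) : Commute (rho (n := n) k) (lamN a b) := by
  induction b using Nat.strong_induction_on generalizing k with
  | _ b ih =>
    by_cases hbn : b < n
    swap
    · rw [lamN_of_not_lt (by omega)]; exact Commute.one_right _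
    obtain rfl | ⟨c, rfl, hac⟩ : b = a + 1 ∨ ∃ c, b = c + 1 ∧ a < c :=
      (Nat.eq_or_lt_of_le hab).imp Eq.symm fun h => ⟨b - 1, by omega, by omega⟩
    · rw [lamN_succ_self hbn]
      rcases (show k + 2 ≤ a ∨ a + 2 ≤ k by omega) with h | h
      · exact (commute_rho_sig h).mul_right (commute_rho_rho h)
      · exact (commute_sig_rho h).symm.mul_right (commute_rho_rho h).symm
    rw [lamN_succ hac hbn]
    by_cases hck : c + 2 ≤ k ∨ k + 2 ≤ c
    · have hr := commute_rho_rho_of_ne (n := n) hck.symm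
      exact (hr.mul_right (ih c (by omega) hac ha (by omega))).mul_right hr
    -- `λ_{a,k+2} = ρ_{k+1} ρ_k λ_{a,k} ρ_k ρ_{k+1}`, and `ρ_{k+1}` commutes with `λ_{a,k}`
    obtain rfl : c = k + 1 := by omega
    rw [lamN_succ (by omega) (by omega)]
    exact commute_conj_of_braid (rho_mul_self k) (rho_mul_self (k + 1)) (rho_braid (by omega))
      (ih k (by omega) (by omega) (by omega) (by omega))

lemma rho_conj_lamN_succ_self {a : ℕ} (h : a + 1 < n) :
    rho a * lamN (n := n) a (a + 1) * rho a = (lamN a (a + 1))⁻¹ := by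
  rw [lamN_succ_self h, mul_inv_rev, sig_inv, rho_inv]
  simp only [mul_assoc, rho_mul_self, mul_one]

lemma rho_conj_lamN_left {a b : ℕ} (hab : a + 1 < b) (hb : b < n) :
    rho a * lamN (n := n) a b * rho a = lamN (a + 1) b := by
  induction b, hab using Nat.le_induction with
  | base =>
    have ha : a + 1 < n - 1 := by omega
    rw [lamN_succ (by omega) hb, lamN_succ_self (by omega), lamN_succ_self (by omega)]
    calc rho a * (rho (a + 1) * (sig a * rho a) * rho (a + 1)) * rho a
        = (rho a * rho (a + 1) * sig a) * (rho a * rho (a + 1) * rho a) := by group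
      _ = sig (a + 1) * (rho a * (rho (a + 1) * rho (a + 1)) * rho a) * rho (a + 1) := by
        rw [rho_rho_sig ha, rho_braid ha]; group
      _ = sig (a + 1) * rho (a + 1) := by
        rw [rho_mul_self, mul_one, rho_mul_self, mul_one]
  | succ c hac ih =>
    rw [lamN_succ (by omega) hb, lamN_succ (by omega) hb,
      conj_conj_of_commute (commute_rho_rho (by omega)), ih (by omega)]

lemma rho_conj_lamN_succ_left {k b : ℕ} (hkb : k + 1 < b) (hb : b < n) :
    rho k * lamN (n := n) (k + 1) b * rho k = lamN k b := by
  rw [← rho_conj_lamN_left hkb hb, rho_conj_rho_conj]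

/-- `λ_{a,b}` for all `a, b`, with `λ_{b,a} = λ_{a,b}⁻¹` (and `1` out of range). -/
def lamS (a b : ℕ) : VT n := if a < b then lamN a b else (lamN b a)⁻¹

lemma lamS_of_lt {a b : ℕ} (h : a < b) : lamS (n := n) a b = lamN a b := if_pos h

lemma lamS_of_le {a b : ℕ} (h : b ≤ a) : lamS (n := n) a b = (lamN b a)⁻¹ :=
  if_neg (by omega)

lemma lamS_self (a : ℕ) : lamS (n := n) a a = 1 := by
  rw [lamS_of_le le_rfl, lamN_of_not_lt (by omega), inv_one]

lemma lamS_inv (a b : ℕ) : (lamS (n := n) a b)⁻¹ = lamS b a := by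
  rcases lt_trichotomy a b with h | rfl | h
  · rw [lamS_of_lt h, lamS_of_le h.le]
  · rw [lamS_self, inv_one]
  · rw [lamS_of_le h.le, lamS_of_lt h, inv_inv]

lemma rho_conj_lamN {k a b : ℕ} (hab : a < b) (hb : b < n) (hk : k < n - 1) :
    rho k * lamN (n := n) a b * rho k
      = lamS (Equiv.swap k (k + 1) a) (Equiv.swap k (k + 1) b) := by
  by_cases ha : a = k ∨ a = k + 1
  · rcases ha with rfl | rfl
    · rw [Equiv.swap_apply_left]
      rcases (show b = a + 1 ∨ a + 1 < b by omega) with rfl | hab'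
      · rw [Equiv.swap_apply_right, lamS_of_le (by omega), rho_conj_lamN_succ_self hb]
      · rw [Equiv.swap_apply_of_ne_of_ne (by omega) (by omega), lamS_of_lt hab',
          rho_conj_lamN_left hab' hb]
    · rw [Equiv.swap_apply_right, Equiv.swap_apply_of_ne_of_ne (by omega) (by omega),
        lamS_of_lt (by omega), rho_conj_lamN_succ_left hab hb]
  rw [Equiv.swap_apply_of_ne_of_ne (by omega) (by omega)]
  by_cases hb' : b = k ∨ b = k + 1
  · rcases hb' with rfl | rfl
    · rw [Equiv.swap_apply_left, lamS_of_lt (by omega), lamN_succ hab (by omega)]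
    · rw [Equiv.swap_apply_right, lamS_of_lt (by omega), lamN_succ (by omega) hb,
        rho_conj_rho_conj]
  rw [Equiv.swap_apply_of_ne_of_ne (by omega) (by omega), lamS_of_lt hab,
    (commute_rho_lamN hab (by omega) (by omega)).eq, mul_assoc, rho_mul_self,
    mul_one]

lemma rho_conj_lamS {k a b : ℕ} (ha : a < n) (hb : b < n) (hk : k < n - 1) :
    rho k * lamS (n := n) a b * rho k
      = lamS (Equiv.swap k (k + 1) a) (Equiv.swap k (k + 1) b) := by
  rcases lt_trichotomy a b with h | rfl | h
  · rw [lamS_of_lt h, rho_conj_lamN h hb hk]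
  · rw [lamS_self, lamS_self, mul_one, rho_mul_self]
  · rw [lamS_of_le h.le, ← rho_inv, ← mul_inv_rev, ← mul_inv_rev, ← mul_assoc,
      rho_conj_lamN h ha hk, lamS_inv]

end RhoConjugation

section SymmetricGroupAction

variable {n : ℕ}

lemma tr_val (i : Fin (n - 1)) (x : Fin n) : (tr i x : ℕ) = Equiv.swap (i : ℕ) (i + 1) x := by
  simp only [tr, Equiv.swap_apply_def, Fin.ext_iff]
  split_ifs <;> simp_all

def coxToVT (n : ℕ) : CoxA n →* VT n :=
  PresentedGroup.toGroup (rels := coxRels n) (f := fun i : Fin (n - 1) => rho (n := n) i) <| by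
    rintro w (⟨i, rfl⟩ | ⟨i, j, hij, rfl⟩ | ⟨i, j, hij, rfl⟩)
    · simp [rho_mul_self]
    · exact lift_commutatorElement_eq_one (commute_rho_rho hij)
    · have hi : (i : ℕ) + 1 < n - 1 := hij ▸ j.2
      simp [hij, rho_braid hi]

lemma coxToVT_of (i : Fin (n - 1)) : coxToVT n (PresentedGroup.of i) = rho i :=
  PresentedGroup.toGroup.of _

lemma coxToVT_conj_lamS (w : CoxA n) (a b : Fin n) :
    coxToVT n w * lamS a b * (coxToVT n w)⁻¹ = lamS (coxPerm n w a) (coxPerm n w b) := by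
  let P (w : CoxA n) : Prop := ∀ a b : Fin n,
    coxToVT n w * lamS a b * (coxToVT n w)⁻¹ = lamS (coxPerm n w a) (coxPerm n w b)
  have hgen (i : Fin (n - 1)) : P (PresentedGroup.of i) := fun a b => by
    rw [coxToVT_of, coxPerm_of, rho_inv, tr_val, tr_val, rho_conj_lamS a.2 b.2 i.2]
  have hmul {g y : CoxA n} (hg : P g) (hy : P y) : P (g * y) := fun a b =>
    calc coxToVT n (g * y) * lamS a b * (coxToVT n (g * y))⁻¹
        = coxToVT n g * (coxToVT n y * lamS a b * (coxToVT n y)⁻¹) * (coxToVT n g)⁻¹ := by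
          rw [map_mul]; group
      _ = lamS (coxPerm n (g * y) a) (coxPerm n (g * y) b) := by rw [hy, hg, map_mul]; rfl
  have hw : w ∈ Subgroup.closure (Set.range PresentedGroup.of) :=
    PresentedGroup.closure_range_of (coxRels n) ▸ Subgroup.mem_top w
  induction hw using Subgroup.closure_induction_left generalizing a b with
  | one => simp
  | mul_left g hg y _ ih =>
    obtain ⟨i, rfl⟩ := hg
    exact hmul (hgen i) ih a b
  | inv_mul_cancel g hg y _ ih =>
    obtain ⟨i, rfl⟩ := hg
    rw [coxA_of_inv]
    exact hmul (hgen i) ih a b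

noncomputable def permToVT (n : ℕ) : Equiv.Perm (Fin n) →* VT n :=
  (coxToVT n).comp (coxEquiv n).symm.toMonoidHom

lemma permToVT_tr (i : Fin (n - 1)) : permToVT n (tr i) = rho i := by
  have h : (coxEquiv n).symm (tr i) = PresentedGroup.of i :=
    (MulEquiv.symm_apply_eq _).mpr (coxPerm_of i).symm
  rw [permToVT, MonoidHom.comp_apply, MulEquiv.coe_toMonoidHom, h, coxToVT_of]

lemma permToVT_conj_lamS (σ : Equiv.Perm (Fin n)) (a b : Fin n) :
    permToVT n σ * lamS a b * (permToVT n σ)⁻¹ = lamS (σ a) (σ b) := by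
  have h := coxToVT_conj_lamS ((coxEquiv n).symm σ) a b
  rwa [show coxPerm n ((coxEquiv n).symm σ) = σ from (coxEquiv n).apply_symm_apply σ] at h

lemma commute_lamN_of_disjoint {a b c d : Fin n} (hab : a < b) (hcd : c < d)
    (hac : a ≠ c) (had : a ≠ d) (hbc : b ≠ c) (hbd : b ≠ d) :
    Commute (lamN (n := n) a b) (lamN c d) := by
  have hf : Function.Injective ![a, b, c, d] := by
    intro x y hxy
    fin_cases x <;> fin_cases y <;> simp_all [hab.ne, hcd.ne, hab.ne', hcd.ne', eq_comm]
  have h4 : 4 ≤ n := by simpa using Fintype.card_le_of_injective _ hf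
  obtain ⟨σ, hσ⟩ := Equiv.Perm.exists_extending_pair ![a, b, c, d] (Fin.castLE h4)
    hf (Fin.castLE_injective h4)
  have hval (i : Fin 4) : (σ (![a, b, c, d] i) : ℕ) = i := by rw [hσ]; rfl
  rw [← lamS_of_lt hab, ← lamS_of_lt hcd, ← Commute.conj_iff (permToVT n σ),
    permToVT_conj_lamS, permToVT_conj_lamS, show (σ a : ℕ) = 0 from hval 0,
    show (σ b : ℕ) = 1 from hval 1, show (σ c : ℕ) = 2 from hval 2,
    show (σ d : ℕ) = 3 from hval 3]
  rw [lamS_of_lt (show 0 < 0 + 1 by omega), lamS_of_lt (show 2 < 2 + 1 by omega),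
    lamN_succ_self (a := 0) (by omega), lamN_succ_self (a := 2) (by omega)]
  have h02 : 0 + 2 ≤ 2 := le_rfl
  exact ((commute_sig_sig h02).mul_right (commute_sig_rho h02)).mul_left
    ((commute_rho_sig h02).mul_right (commute_rho_rho h02))

end SymmetricGroupAction

section Raag

variable {n : ℕ}

abbrev Raag (n : ℕ) := PresentedGroup (raagRels n)

/-- `λ_{a,b}` for all `a, b`, with `λ_{b,a} = λ_{a,b}⁻¹` (and `1` out of range). -/
def raagGen (a b : ℕ) : Raag n :=
  if h : a < b ∧ b < n then PresentedGroup.of ⟨(⟨a, by omega⟩, ⟨b, h.2⟩), h.1⟩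
  else if h' : b < a ∧ a < n then
    (PresentedGroup.of ⟨(⟨b, by omega⟩, ⟨a, h'.2⟩), h'.1⟩)⁻¹
  else 1

lemma raagGen_eq_of (p : Vtx n) : raagGen (n := n) p.1.1 p.1.2 = PresentedGroup.of p := by
  rw [raagGen, dif_pos ⟨p.2, p.1.2.2⟩]

lemma raagGen_inv (a b : ℕ) : (raagGen (n := n) a b)⁻¹ = raagGen b a := by
  unfold raagGen
  split_ifs <;> first | omega | simp

lemma raagGen_self (a : ℕ) : raagGen (n := n) a a = 1 := by
  simp [raagGen]

lemma commute_raagGen_of_lt {a b c d : Fin n} (hab : a < b) (hcd : c < d)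
    (hac : a ≠ c) (had : a ≠ d) (hbc : b ≠ c) (hbd : b ≠ d) :
    Commute (raagGen (n := n) a b) (raagGen c d) := by
  rw [raagGen_eq_of ⟨(a, b), hab⟩, raagGen_eq_of ⟨(c, d), hcd⟩]
  exact commute_of_commutatorElement_mem ⟨_, _, ⟨hac, had, hbc, hbd⟩, rfl⟩

lemma commute_raagGen {a b c d : Fin n}
    (hac : a ≠ c) (had : a ≠ d) (hbc : b ≠ c) (hbd : b ≠ d) :
    Commute (raagGen (n := n) a b) (raagGen c d) := by
  have right {a b : Fin n} (hab : a < b) (hac : a ≠ c) (had : a ≠ d) (hbc : b ≠ c)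
      (hbd : b ≠ d) : Commute (raagGen (n := n) a b) (raagGen c d) := by
    rcases lt_trichotomy c d with h | rfl | h
    · exact commute_raagGen_of_lt hab h hac had hbc hbd
    · rw [raagGen_self]; exact Commute.one_right _
    · rw [← raagGen_inv (d : ℕ) c]
      exact (commute_raagGen_of_lt hab h had hac hbd hbc).inv_right
  rcases lt_trichotomy a b with h | rfl | h
  · exact right h hac had hbc hbd
  · rw [raagGen_self]; exact Commute.one_left _
  · rw [← raagGen_inv (b : ℕ) a]; exact (right h hbc hbd hac had).inv_left

def raagAct (σ : Equiv.Perm (Fin n)) : Raag n →* Raag n :=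
  PresentedGroup.toGroup (f := fun p => raagGen (σ p.1.1) (σ p.1.2)) <| by
    rintro _ ⟨p, q, ⟨h1, h2, h3, h4⟩, rfl⟩
    exact lift_commutatorElement_eq_one (commute_raagGen (σ.injective.ne h1)
      (σ.injective.ne h2) (σ.injective.ne h3) (σ.injective.ne h4))

lemma raagAct_of (σ : Equiv.Perm (Fin n)) (p : Vtx n) :
    raagAct σ (PresentedGroup.of p) = raagGen (σ p.1.1) (σ p.1.2) :=
  PresentedGroup.toGroup.of _

lemma raagAct_raagGen (σ : Equiv.Perm (Fin n)) (a b : Fin n) :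
    raagAct σ (raagGen a b) = raagGen (σ a) (σ b) := by
  rcases lt_trichotomy a b with h | rfl | h
  · rw [raagGen_eq_of ⟨(a, b), h⟩, raagAct_of]
  · rw [raagGen_self, raagGen_self, map_one]
  · rw [← raagGen_inv, raagGen_eq_of ⟨(b, a), h⟩, map_inv, raagAct_of, raagGen_inv]

lemma raagAct_mul (σ τ : Equiv.Perm (Fin n)) :
    raagAct (σ * τ) = (raagAct σ).comp (raagAct τ) :=
  PresentedGroup.ext fun p => by
    rw [MonoidHom.comp_apply, raagAct_of, raagAct_of, raagAct_raagGen]; rfl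

lemma raagAct_one : raagAct (n := n) 1 = MonoidHom.id _ :=
  PresentedGroup.ext fun p => by rw [raagAct_of, ← raagGen_eq_of]; rfl

def raagAut (n : ℕ) : Equiv.Perm (Fin n) →* MulAut (Raag n) where
  toFun σ := MonoidHom.toMulEquiv (raagAct σ) (raagAct σ⁻¹)
    (by rw [← raagAct_mul, inv_mul_cancel, raagAct_one])
    (by rw [← raagAct_mul, mul_inv_cancel, raagAct_one])
  map_one' := MulEquiv.ext fun x => by simp [raagAct_one]
  map_mul' σ τ := MulEquiv.ext fun x => by simp [raagAct_mul]

lemma raagAut_apply (σ : Equiv.Perm (Fin n)) (x : Raag n) : raagAut n σ x = raagAct σ x := rfl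

lemma raagAut_tr_raagGen {i : Fin (n - 1)} {a b : ℕ} (ha : a < n) (hb : b < n) :
    raagAut n (tr i) (raagGen a b)
      = raagGen (Equiv.swap (i : ℕ) (i + 1) a) (Equiv.swap (i : ℕ) (i + 1) b) := by
  rw [raagAut_apply, ← tr_val i ⟨a, ha⟩, ← tr_val i ⟨b, hb⟩]
  exact raagAct_raagGen (tr i) ⟨a, ha⟩ ⟨b, hb⟩

end Raag

section Semidirect

variable {n : ℕ}

abbrev RaagSemidirect (n : ℕ) := Raag n ⋊[raagAut n] Equiv.Perm (Fin n)

lemma mk_mul_mk (x y : Raag n) (σ τ : Equiv.Perm (Fin n)) :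
    (⟨x, σ⟩ * ⟨y, τ⟩ : RaagSemidirect n) = ⟨x * raagAut n σ y, σ * τ⟩ := rfl

def sdSig (i : Fin (n - 1)) : RaagSemidirect n := ⟨raagGen i (i + 1), tr i⟩

def sdRho (i : Fin (n - 1)) : RaagSemidirect n := ⟨1, tr i⟩

lemma raagAut_tr_far {i j : Fin (n - 1)} (h : (i : ℕ) + 2 ≤ j ∨ (j : ℕ) + 2 ≤ i) :
    raagAut n (tr i) (raagGen j (j + 1)) = raagGen j (j + 1) := by
  rw [raagAut_tr_raagGen (by omega) (by omega), Equiv.swap_apply_of_ne_of_ne (by omega) (by omega),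
    Equiv.swap_apply_of_ne_of_ne (by omega) (by omega)]

lemma sdSig_mul_self (i : Fin (n - 1)) : sdSig i * sdSig i = 1 := by
  rw [sdSig, mk_mul_mk, raagAut_tr_raagGen (by omega) (by omega), Equiv.swap_apply_left,
    Equiv.swap_apply_right, ← raagGen_inv (i : ℕ), mul_inv_cancel, tr_sq]
  rfl

lemma sdRho_mul_self (i : Fin (n - 1)) : sdRho i * sdRho i = 1 := by
  rw [sdRho, mk_mul_mk, map_one, mul_one, tr_sq]
  rfl

lemma commute_sdSig {i j : Fin (n - 1)} (h : (i : ℕ) + 2 ≤ j) :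
    Commute (sdSig i) (sdSig j) := by
  rw [Commute, SemiconjBy, sdSig, sdSig, mk_mul_mk, mk_mul_mk, raagAut_tr_far (Or.inl h),
    raagAut_tr_far (Or.inr h), (tr_commute h).eq,
    (commute_raagGen (a := ⟨i, by omega⟩) (b := ⟨i + 1, by omega⟩) (c := ⟨j, by omega⟩)
      (d := ⟨j + 1, by omega⟩) (by simp; omega) (by simp; omega) (by simp; omega)
      (by simp; omega)).eq]

lemma commute_sdRho {i j : Fin (n - 1)} (h : (i : ℕ) + 2 ≤ j) :
    Commute (sdRho i) (sdRho j) := by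
  simp only [Commute, SemiconjBy, sdRho, mk_mul_mk, map_one, (tr_commute h).eq]

lemma commute_sdRho_sdSig {i j : Fin (n - 1)} (h : (i : ℕ) + 2 ≤ j ∨ (j : ℕ) + 2 ≤ i) :
    Commute (sdRho i) (sdSig j) := by
  have hij : Commute (tr i) (tr j) := h.elim tr_commute fun h => (tr_commute h).symm
  rw [Commute, SemiconjBy, sdRho, sdSig, mk_mul_mk, mk_mul_mk, raagAut_tr_far h, map_one,
    one_mul, mul_one, hij.eq]

lemma sdRho_braid {i j : Fin (n - 1)} (h : (j : ℕ) = i + 1) :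
    sdRho i * sdRho j * sdRho i = sdRho j * sdRho i * sdRho j := by
  simp only [sdRho, mk_mul_mk, map_one, mul_one, tr_braid h]

lemma sdRho_sdRho_sdSig {i j : Fin (n - 1)} (h : (j : ℕ) = i + 1) :
    sdRho i * sdRho j * sdSig i = sdSig j * sdRho i * sdRho j := by
  have hj := j.2
  have h1 : raagAut n (tr j) (raagGen i (i + 1)) = raagGen i (i + 2) := by
    rw [raagAut_tr_raagGen (by omega) (by omega), h,
      Equiv.swap_apply_of_ne_of_ne (by omega) (by omega), Equiv.swap_apply_left]
  have h2 : raagAut n (tr i) (raagGen i (i + 2)) = raagGen j (j + 1) := by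
    rw [raagAut_tr_raagGen (by omega) (by omega), Equiv.swap_apply_left, h,
      Equiv.swap_apply_of_ne_of_ne (by omega) (by omega)]
  simp only [sdRho, sdSig, mk_mul_mk, map_one, mul_one, one_mul, tr_braid h, map_mul,
    MulAut.mul_apply, h1, h2]

def toSemidirect (n : ℕ) : VT n →* RaagSemidirect n :=
  PresentedGroup.toGroup (f := Sum.elim sdSig sdRho) <| by
    rintro w (⟨i, rfl⟩ | ⟨i, j, hij, rfl⟩ | ⟨i, rfl⟩ | ⟨i, j, hij, rfl⟩ |
      ⟨i, j, hij, rfl⟩ | ⟨i, j, hij, (rfl | rfl)⟩ | ⟨i, j, hij, rfl⟩)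
    · simpa [fs] using sdSig_mul_self i
    · exact lift_commutatorElement_eq_one (commute_sdSig hij)
    · simpa [fr] using sdRho_mul_self i
    · exact lift_commutatorElement_eq_one (commute_sdRho hij)
    · simp [fr, sdRho_braid hij]
    · exact lift_commutatorElement_eq_one (commute_sdRho_sdSig (Or.inl hij))
    · exact lift_commutatorElement_eq_one (commute_sdRho_sdSig (Or.inr hij)).symm
    · simp [fr, fs, sdRho_sdRho_sdSig hij]

lemma toSemidirect_sig {k : ℕ} (h : k < n - 1) : toSemidirect n (sig k) = sdSig ⟨k, h⟩ := by
  rw [← sg_eq_sig h]; exact PresentedGroup.toGroup.of _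

lemma toSemidirect_rho {k : ℕ} (h : k < n - 1) : toSemidirect n (rho k) = sdRho ⟨k, h⟩ := by
  rw [← rg_eq_rho h]; exact PresentedGroup.toGroup.of _

lemma rightHom_comp_toSemidirect : SemidirectProduct.rightHom.comp (toSemidirect n) = perm n :=
  PresentedGroup.ext fun
    | .inl _ | .inr _ => by
      simp only [MonoidHom.comp_apply, toSemidirect, perm, PresentedGroup.toGroup.of,
        Sum.elim_inl, Sum.elim_inr]
      rfl

lemma toSemidirect_lamN {a b : ℕ} (hab : a < b) (hb : b < n) :
    toSemidirect n (lamN a b) = ⟨raagGen a b, 1⟩ := by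
  induction b, hab using Nat.le_induction with
  | base =>
    rw [lamN_succ_self hb, map_mul, toSemidirect_sig (by omega), toSemidirect_rho (by omega),
      sdSig, sdRho, mk_mul_mk, map_one, mul_one, tr_sq]
  | succ c hac ih =>
    rw [lamN_succ hac hb, map_mul, map_mul, toSemidirect_rho (by omega), ih (by omega), sdRho,
      mk_mul_mk, mk_mul_mk, map_one, mul_one, one_mul, mul_one, tr_sq,
      raagAut_tr_raagGen (by omega) (by omega), Fin.val_mk,
      Equiv.swap_apply_of_ne_of_ne (by omega) (by omega), Equiv.swap_apply_left]

def raagToVT (n : ℕ) : Raag n →* VT n :=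
  PresentedGroup.toGroup (f := lam) <| by
    rintro _ ⟨p, q, ⟨h1, h2, h3, h4⟩, rfl⟩
    exact lift_commutatorElement_eq_one (commute_lamN_of_disjoint p.2 q.2 h1 h2 h3 h4)

lemma raagToVT_of (p : Vtx n) : raagToVT n (PresentedGroup.of p) = lam p :=
  PresentedGroup.toGroup.of _

lemma raagToVT_raagGen (a b : ℕ) : raagToVT n (raagGen a b) = lamS a b := by
  unfold raagGen
  split_ifs with h h'
  · rw [raagToVT_of, lam, lamS_of_lt h.1]
  · rw [map_inv, raagToVT_of, lam, ← lamS_of_lt h'.1, lamS_inv]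
  · rcases lt_trichotomy a b with hab | rfl | hab
    · rw [map_one, lamS_of_lt hab, lamN_of_not_lt (by omega)]
    · rw [map_one, lamS_self]
    · rw [map_one, lamS_of_le hab.le, lamN_of_not_lt (by omega), inv_one]

lemma toSemidirect_raagToVT (x : Raag n) :
    toSemidirect n (raagToVT n x) = SemidirectProduct.inl x := by
  suffices (toSemidirect n).comp (raagToVT n) = SemidirectProduct.inl from DFunLike.congr_fun this x
  exact PresentedGroup.ext fun p => by
    rw [MonoidHom.comp_apply, raagToVT_of, lam, toSemidirect_lamN p.2 p.1.2.2, raagGen_eq_of]; rfl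

lemma raagToVT_injective : Function.Injective (raagToVT n) := fun x y h =>
  SemidirectProduct.inl_injective (by rw [← toSemidirect_raagToVT, ← toSemidirect_raagToVT, h])

lemma raagToVT_comp_raagAut (σ : Equiv.Perm (Fin n)) :
    (raagToVT n).comp (raagAut n σ).toMonoidHom
      = (MulAut.conj (permToVT n σ)).toMonoidHom.comp (raagToVT n) :=
  PresentedGroup.ext fun p => by
    simp only [MonoidHom.comp_apply, MulEquiv.coe_toMonoidHom, MulAut.conj_apply, raagAut_apply,
      raagAct_of, raagToVT_raagGen, raagToVT_of, lam, ← permToVT_conj_lamS, lamS_of_lt p.2]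

noncomputable def ofSemidirect (n : ℕ) : RaagSemidirect n →* VT n :=
  SemidirectProduct.lift (raagToVT n) (permToVT n) raagToVT_comp_raagAut

lemma ofSemidirect_apply (y : RaagSemidirect n) :
    ofSemidirect n y = raagToVT n y.left * permToVT n y.right := rfl

lemma ofSemidirect_toSemidirect (x : VT n) : ofSemidirect n (toSemidirect n x) = x := by
  suffices (ofSemidirect n).comp (toSemidirect n) = MonoidHom.id _ from DFunLike.congr_fun this x
  refine PresentedGroup.ext fun
    | .inl i => ?_
    | .inr i => ?_
  · change ofSemidirect n (toSemidirect n (sg i i.2)) = sg i i.2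
    rw [sg_eq_sig, toSemidirect_sig, ofSemidirect_apply, sdSig, raagToVT_raagGen, permToVT_tr,
      lamS_of_lt (by omega), lamN_succ_self (by omega), mul_assoc, rho_mul_self, mul_one]
  · change ofSemidirect n (toSemidirect n (rg i i.2)) = rg i i.2
    rw [rg_eq_rho, toSemidirect_rho, ofSemidirect_apply, sdRho, map_one, one_mul, permToVT_tr]

lemma range_raagToVT : (raagToVT n).range = (perm n).ker := by
  ext x
  constructor
  · rintro ⟨y, rfl⟩
    rw [MonoidHom.mem_ker, ← rightHom_comp_toSemidirect, MonoidHom.comp_apply,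
      toSemidirect_raagToVT, SemidirectProduct.rightHom_inl]
  · intro hx
    have h : (toSemidirect n x).right = 1 := by
      rwa [← SemidirectProduct.rightHom_eq_right, ← MonoidHom.comp_apply,
        rightHom_comp_toSemidirect]
    refine ⟨(toSemidirect n x).left, ?_⟩
    calc raagToVT n (toSemidirect n x).left = ofSemidirect n (toSemidirect n x) := by
          rw [ofSemidirect_apply, h, map_one, mul_one]
      _ = x := ofSemidirect_toSemidirect x

end Semidirect

theorem pvt_presentation_general (n : ℕ) :
    ∃ e : PresentedGroup (raagRels n) ≃* (perm n).ker,
      ∀ p : Vtx n, ((e (PresentedGroup.of p) : (perm n).ker) : VT n) = lam p :=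
  ⟨(MonoidHom.ofInjective raagToVT_injective).trans (MulEquiv.subgroupCongr range_raagToVT),
    raagToVT_of⟩

/-- `PVT_n` has the right-angled Artin presentation with generators `λ_{i,j}`,
`1 ≤ i < j ≤ n`, and relations `λ_{i,j}λ_{k,l} = λ_{k,l}λ_{i,j}` for distinct `i,j,k,l`:
the presented group is isomorphic to `PVT_n = ker(π : VT_n → S_n)` via an isomorphism
sending each generator to `λ_{i,j}`. -/
theorem pvt_presentation (n : ℕ) (hn : 2 ≤ n) :
    ∃ e : PresentedGroup (raagRels n) ≃* (perm n).ker,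
      ∀ p : Vtx n, ((e (PresentedGroup.of p) : (perm n).ker) : VT n) = lam p :=
  pvt_presentation_general n

end VTG
end

section
/- For n ≥ 2, the pure virtual twin group PVT_n is an irreducible right-angled Artin group: it cannot be written as a direct product of two non-trivial subgroups. -/
/-!
`PVT_n` is the right-angled Artin group `A_Γ` of the graph `Γ` on the pairs `{i, j}` in which
disjoint pairs are adjacent. For `n ≥ 2` the complement of `Γ` is connected, and a right-angled
Artin group whose defining graph has connected complement is directly indecomposable.

Let `A_Γ` be the internal direct product of `A` and `B`, and split each generator as
`v = a_v b_v`. For non-adjacent `v, w`, the map to the integral Heisenberg group sending `v` and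
`w` to the two standard generators and every other vertex to `1` shows that commuting elements
have proportional `(v, w)`-exponent vectors. Along the edges of the complement of `Γ` this forces,
once some `a_v` has nonzero `v`-exponent (otherwise some `b_v` has, and the roles swap), all
exponents of all elements of `B` to vanish. Each
`b_w` then commutes with `w`, so by Servatius' centralizer theorem (via the splitting of `A_Γ` as
an amalgam of the star of `w` and `Γ - w` over the link of `w`) it lies in the subgroup generated
by the link of `w`. Since every `b_v` commutes with all `a_w = w b_w⁻¹`, the same argument
confines `b_v` to ever smaller special subgroups, so `b_v = 1`, `A` is everything and `B` is
trivial. With a single vertex the group is `ℤ`, where two nontrivial subgroups always meet.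
-/

open Monoid
open scoped commutatorElement

theorem Subgroup.mem_sup_of_commute {G : Type*} [Group G] {s t : Subgroup G}
    (hst : ∀ a ∈ s, ∀ b ∈ t, Commute a b) {x : G} :
    x ∈ s ⊔ t ↔ ∃ y ∈ s, ∃ z ∈ t, y * z = x := by
  refine ⟨fun hx => ?_, fun ⟨y, hy, z, hz, hyz⟩ => hyz ▸ mul_mem_sup hy hz⟩
  rw [sup_eq_closure] at hx
  induction hx using closure_induction with
  | mem x hx =>
    rcases hx with hx | hx
    · exact ⟨x, hx, 1, t.one_mem, mul_one x⟩
    · exact ⟨1, s.one_mem, x, hx, one_mul x⟩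
  | one => exact ⟨1, s.one_mem, 1, t.one_mem, mul_one 1⟩
  | mul _ _ _ _ ih₁ ih₂ =>
    obtain ⟨y₁, hy₁, z₁, hz₁, rfl⟩ := ih₁
    obtain ⟨y₂, hy₂, z₂, hz₂, rfl⟩ := ih₂
    refine ⟨y₁ * y₂, mul_mem hy₁ hy₂, z₁ * z₂, mul_mem hz₁ hz₂, ?_⟩
    rw [mul_assoc, mul_assoc, (hst y₂ hy₂ z₁ hz₁).left_comm]
  | inv _ _ ih =>
    obtain ⟨y, hy, z, hz, rfl⟩ := ih
    exact ⟨y⁻¹, inv_mem hy, z⁻¹, inv_mem hz, by rw [mul_inv_rev, (hst y hy z hz).inv_inv.eq]⟩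

theorem Subgroup.eq_bot_or_eq_bot_of_injective_int {G : Type*} [Group G]
    {f : G →* Multiplicative ℤ} (hf : Function.Injective f) {A B : Subgroup G}
    (h : A ⊓ B = ⊥) : A = ⊥ ∨ B = ⊥ := by
  obtain hA | ⟨x, hxA, hx⟩ := A.bot_or_exists_ne_one
  · exact .inl hA
  obtain hB | ⟨y, hyB, hy⟩ := B.bot_or_exists_ne_one
  · exact .inr hB
  have hfx : (f x).toAdd ≠ 0 := fun h0 => hx (hf (by simp [← toAdd_eq_zero, h0]))
  have hfy : (f y).toAdd ≠ 0 := fun h0 => hy (hf (by simp [← toAdd_eq_zero, h0]))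
  have hxy : x ^ (f y).toAdd = y ^ (f x).toAdd := hf (by
    apply Multiplicative.toAdd.injective
    simp [map_zpow, toAdd_zpow, mul_comm])
  have h1 : x ^ (f y).toAdd = 1 := by
    rw [← Subgroup.mem_bot, ← h]
    exact ⟨zpow_mem hxA _, hxy ▸ zpow_mem hyB _⟩
  have := congrArg (fun g => (f g).toAdd) h1
  simp only [map_zpow, toAdd_zpow, smul_eq_mul, map_one, toAdd_one] at this
  exact absurd this (mul_ne_zero hfy hfx)

/-- `⟨a, b, c⟩` is the integer matrix `!![1, a, c; 0, 1, b; 0, 0, 1]`. -/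
@[ext]
structure Heisenberg where
  a : ℤ
  b : ℤ
  c : ℤ

namespace Heisenberg

instance : Mul Heisenberg := ⟨fun x y => ⟨x.a + y.a, x.b + y.b, x.c + y.c + x.a * y.b⟩⟩
instance : One Heisenberg := ⟨⟨0, 0, 0⟩⟩
instance : Inv Heisenberg := ⟨fun x => ⟨-x.a, -x.b, -x.c + x.a * x.b⟩⟩

@[simp] lemma mul_a (x y : Heisenberg) : (x * y).a = x.a + y.a := rfl
@[simp] lemma mul_b (x y : Heisenberg) : (x * y).b = x.b + y.b := rfl
@[simp] lemma mul_c (x y : Heisenberg) : (x * y).c = x.c + y.c + x.a * y.b := rfl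
@[simp] lemma one_a : (1 : Heisenberg).a = 0 := rfl
@[simp] lemma one_b : (1 : Heisenberg).b = 0 := rfl
@[simp] lemma one_c : (1 : Heisenberg).c = 0 := rfl
@[simp] lemma inv_a (x : Heisenberg) : x⁻¹.a = -x.a := rfl
@[simp] lemma inv_b (x : Heisenberg) : x⁻¹.b = -x.b := rfl
@[simp] lemma inv_c (x : Heisenberg) : x⁻¹.c = -x.c + x.a * x.b := rfl

instance : Group Heisenberg where
  mul_assoc x y z := by ext <;> simp <;> ring
  one_mul x := by ext <;> simp
  mul_one x := by ext <;> simp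
  inv_mul_cancel x := by ext <;> simp

lemma commute_iff {x y : Heisenberg} : Commute x y ↔ x.a * y.b = y.a * x.b := by
  refine ⟨fun h => ?_, fun h => ?_⟩
  · have := congrArg Heisenberg.c h.eq
    simp only [mul_c] at this
    linarith
  · ext <;> simp <;> linarith

def aHom : Heisenberg →* Multiplicative ℤ where
  toFun x := .ofAdd x.a
  map_one' := rfl
  map_mul' _ _ := rfl

def bHom : Heisenberg →* Multiplicative ℤ where
  toFun x := .ofAdd x.b
  map_one' := rfl
  map_mul' _ _ := rfl

end Heisenberg

namespace Monoid.PushoutI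

variable {ι : Type*} {G : ι → Type*} [∀ i, Group (G i)] {H : Type*} [Group H]
  {φ : ∀ i, H →* G i}

variable (φ) in
def letterProd (l : List (Σ i, G i)) : PushoutI φ :=
  (l.map fun p => of p.1 p.2).prod

variable (φ) in
def ReducedList (l : List (Σ i, G i)) : Prop :=
  l.IsChain (fun p q => p.1 ≠ q.1) ∧ ∀ p ∈ l, p.2 ∉ (φ p.1).range

def invRev (l : List (Σ i, G i)) : List (Σ i, G i) :=
  (l.map fun p => ⟨p.1, p.2⁻¹⟩).reverse

@[simp] lemma letterProd_nil : letterProd φ [] = 1 := rfl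

@[simp] lemma letterProd_cons (p : Σ i, G i) (l : List (Σ i, G i)) :
    letterProd φ (p :: l) = of p.1 p.2 * letterProd φ l :=
  List.prod_cons

@[simp] lemma letterProd_append (l₁ l₂ : List (Σ i, G i)) :
    letterProd φ (l₁ ++ l₂) = letterProd φ l₁ * letterProd φ l₂ := by
  simp [letterProd]

lemma invRev_cons (p : Σ i, G i) (l : List (Σ i, G i)) :
    invRev (p :: l) = invRev l ++ [⟨p.1, p.2⁻¹⟩] := by
  simp [invRev]

@[simp] lemma letterProd_invRev (l : List (Σ i, G i)) :
    letterProd φ (invRev l) = (letterProd φ l)⁻¹ := by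
  induction l with
  | nil => simp [invRev]
  | cons p l ih => simp [invRev_cons, ih]

namespace ReducedList

lemma tail {p : Σ i, G i} {l : List (Σ i, G i)} (h : ReducedList φ (p :: l)) :
    ReducedList φ l :=
  ⟨h.1.tail, fun q hq => h.2 q (List.mem_cons_of_mem _ hq)⟩

lemma invRev {l : List (Σ i, G i)} (h : ReducedList φ l) : ReducedList φ (invRev l) := by
  refine ⟨?_, ?_⟩
  · rw [PushoutI.invRev, List.isChain_reverse, List.isChain_map]
    exact h.1.imp fun _ _ hne => hne.symm
  · simp only [PushoutI.invRev, List.mem_reverse, List.mem_map]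
    rintro _ ⟨p, hp, rfl⟩
    exact fun hr => h.2 p hp (inv_inv p.2 ▸ inv_mem hr)

lemma letterProd_notMem_base (hφ : ∀ i, Function.Injective (φ i)) {l : List (Σ i, G i)}
    (hl : ReducedList φ l) (hne : l ≠ []) : letterProd φ l ∉ (base φ).range := by
  intro hmem
  let w : CoprodI.Word G :=
    ⟨l, fun p hp h1 => hl.2 p hp (h1 ▸ one_mem _), hl.1⟩
  have hw : ofCoprodI w.prod = letterProd φ l := by
    simp [w, CoprodI.Word.prod, letterProd, map_list_prod, Function.comp_def]
  have := (show Reduced φ w from hl.2).eq_empty_of_mem_range hφ (hw ▸ hmem)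
  exact hne (congrArg CoprodI.Word.toList this)

lemma letterProd_notMem_range_of_head_ne (hφ : ∀ i, Function.Injective (φ i)) {i : ι}
    {p : Σ i, G i} {l : List (Σ i, G i)} (hl : ReducedList φ (p :: l)) (hp : p.1 ≠ i) :
    letterProd φ (p :: l) ∉ (of i).range := by
  rintro ⟨c, hc⟩
  by_cases hcr : c ∈ (φ i).range
  · obtain ⟨h, rfl⟩ := hcr
    exact hl.letterProd_notMem_base hφ (List.cons_ne_nil _ _) ⟨h, by rw [← hc, of_apply_eq_base]⟩
  · have hl' : ReducedList φ (⟨i, c⁻¹⟩ :: p :: l) := by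
      refine ⟨hl.1.cons ?_, ?_⟩
      · simpa using Ne.symm hp
      · simp only [List.mem_cons, forall_eq_or_imp]
        exact ⟨fun hr => hcr (inv_inv c ▸ inv_mem hr), List.forall_mem_cons.1 hl.2⟩
    refine hl'.letterProd_notMem_base hφ (List.cons_ne_nil _ _) ⟨1, ?_⟩
    rw [letterProd_cons, ← hc, map_inv, inv_mul_cancel, map_one]

lemma letterProd_notMem_range_of_two_le (hφ : ∀ i, Function.Injective (φ i)) (i : ι)
    {l : List (Σ i, G i)} (hl : ReducedList φ l) (h2 : 2 ≤ l.length) :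
    letterProd φ l ∉ (of i).range := by
  obtain _ | ⟨⟨j, a⟩, _ | ⟨q, l⟩⟩ := l
  · simp at h2
  · simp at h2
  by_cases hj : j = i
  · subst hj
    have hq : q.1 ≠ j := (List.isChain_cons_cons.1 hl.1).1.symm
    rintro ⟨c, hc⟩
    refine hl.tail.letterProd_notMem_range_of_head_ne hφ hq ⟨a⁻¹ * c, ?_⟩
    rw [map_mul, hc, letterProd_cons, map_inv, inv_mul_cancel_left]
  · exact hl.letterProd_notMem_range_of_head_ne hφ hj

lemma conj_notMem_range (hφ : ∀ i, Function.Injective (φ i)) {i : ι} {y : G i}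
    (hy : y ∉ (φ i).range) {q : Σ i, G i} {l : List (Σ i, G i)}
    (hl : ReducedList φ (q :: l)) (hq : q.1 ≠ i) :
    (letterProd φ (q :: l))⁻¹ * of i y * letterProd φ (q :: l) ∉ (of i).range := by
  have hw : ReducedList φ (PushoutI.invRev (q :: l) ++ ⟨i, y⟩ :: q :: l) := by
    refine ⟨?_, ?_⟩
    · rw [invRev_cons, List.append_assoc, List.singleton_append, List.isChain_append_cons_cons,
        ← invRev_cons]
      exact ⟨hl.invRev.1, hq, List.isChain_cons_cons.2 ⟨Ne.symm hq, hl.1⟩⟩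
    · simp only [List.mem_append, List.mem_cons]
      rintro p (hp | rfl | hp)
      · exact hl.invRev.2 p hp
      · exact hy
      · exact hl.2 p (List.mem_cons.2 hp)
  convert hw.letterProd_notMem_range_of_two_le hφ i (by simp; omega) using 1
  simp [mul_assoc]

end ReducedList

lemma exists_base_mul_letterProd (hφ : ∀ i, Function.Injective (φ i)) (g : PushoutI φ) :
    ∃ h l, ReducedList φ l ∧ base φ h * letterProd φ l = g := by
  classical
  obtain ⟨d⟩ := NormalWord.transversal_nonempty φ hφ
  set w : NormalWord d := NormalWord.equiv g
  refine ⟨w.head, w.toList, ⟨w.chain_ne, fun p hp hr => w.ne_one p hp ?_⟩, ?_⟩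
  · -- a letter of a normal word lies in the transversal, which meets the base only in `1`
    have h₁ := (d.compl p.1).equiv_snd_eq_self_of_mem_of_one_mem (one_mem _)
      (w.normalized p.1 p.2 hp)
    have h₂ := (d.compl p.1).equiv_snd_eq_one_of_mem_of_one_mem (d.one_mem p.1) hr
    exact congrArg Subtype.val (h₁.symm.trans h₂)
  · have : w.prod = g := NormalWord.equiv.symm_apply_apply g
    rw [← this, NormalWord.prod]
    simp [CoprodI.Word.prod, letterProd, map_list_prod, Function.comp_def]

theorem mem_range_of_commute (hφ : ∀ i, Function.Injective (φ i)) {i : ι} {x : G i}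
    (hx : ∀ c : G i, c * x * c⁻¹ ∉ (φ i).range) {g : PushoutI φ} (hg : Commute g (of i x)) :
    g ∈ (of i).range := by
  obtain ⟨h, l, hl, rfl⟩ := exists_base_mul_letterProd hφ g
  set y := (φ i h)⁻¹ * x * φ i h
  have hconj : (letterProd φ l)⁻¹ * of i y * letterProd φ l ∈ (of i).range := by
    refine ⟨x, ?_⟩
    rw [map_mul, map_mul, map_inv, of_apply_eq_base]
    calc of i x = (base φ h * letterProd φ l)⁻¹ * (base φ h * letterProd φ l * of i x) := by
          group
      _ = _ := by rw [hg.eq]; group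
  obtain _ | ⟨⟨j, a⟩, l⟩ := l
  · exact ⟨φ i h, by simp [of_apply_eq_base]⟩
  by_cases hj : j = i
  · subst hj
    obtain _ | ⟨q, l⟩ := l
    · exact ⟨φ j h * a, by simp [of_apply_eq_base]⟩
    · refine absurd ?_ (hl.tail.conj_notMem_range hφ (hx (a⁻¹ * (φ j h)⁻¹))
        (List.isChain_cons_cons.1 hl.1).1.symm)
      convert hconj using 1
      simp only [y, letterProd_cons, map_mul, map_inv]
      group
  · exact absurd hconj (hl.conj_notMem_range hφ (by simpa [y] using hx (φ i h)⁻¹) hj)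

end Monoid.PushoutI

def RAAG.rels {V : Type*} (Γ : SimpleGraph V) : Set (FreeGroup V) :=
  {r | ∃ p q, Γ.Adj p q ∧ r = ⁅FreeGroup.of p, FreeGroup.of q⁆}

abbrev RAAG {V : Type*} (Γ : SimpleGraph V) := PresentedGroup (RAAG.rels Γ)

namespace RAAG

variable {V : Type*} {Γ : SimpleGraph V}

def of (v : V) : RAAG Γ := PresentedGroup.of v

lemma commute_of_of {p q : V} (h : Γ.Adj p q) : Commute (of p : RAAG Γ) (of q) := by
  have : PresentedGroup.mk (rels Γ) ⁅FreeGroup.of p, FreeGroup.of q⁆ = 1 :=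
    (QuotientGroup.eq_one_iff _).2 (Subgroup.subset_normalClosure ⟨p, q, h, rfl⟩)
  rwa [map_commutatorElement, commutatorElement_eq_one_iff_commute] at this

def lift {K : Type*} [Group K] (f : V → K) (hf : ∀ p q, Γ.Adj p q → Commute (f p) (f q)) :
    RAAG Γ →* K :=
  PresentedGroup.toGroup (f := f) <| by
    rintro _ ⟨p, q, hpq, rfl⟩
    rw [map_commutatorElement, commutatorElement_eq_one_iff_commute]
    simpa using hf p q hpq

@[simp] lemma lift_of {K : Type*} [Group K] (f : V → K)
    (hf : ∀ p q, Γ.Adj p q → Commute (f p) (f q)) (v : V) : lift f hf (of v) = f v :=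
  PresentedGroup.toGroup.of _

@[ext] lemma hom_ext {K : Type*} [Group K] {f g : RAAG Γ →* K}
    (h : ∀ v, f (of v) = g (of v)) : f = g :=
  PresentedGroup.ext h

lemma closure_range_of : Subgroup.closure (Set.range (of : V → RAAG Γ)) = ⊤ :=
  PresentedGroup.closure_range_of _

variable (Γ) in
def incl (S : Set V) : RAAG (Γ.induce S) →* RAAG Γ :=
  lift (fun v => of v.1) fun _ _ h => commute_of_of h

variable (Γ) in
def inclOfLE {S T : Set V} (h : S ⊆ T) : RAAG (Γ.induce S) →* RAAG (Γ.induce T) :=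
  lift (fun v => of ⟨v.1, h v.2⟩) fun _ _ h => commute_of_of h

open scoped Classical in
variable (Γ) in
noncomputable def restrict (S : Set V) : RAAG Γ →* RAAG (Γ.induce S) :=
  lift (fun v => if h : v ∈ S then of ⟨v, h⟩ else 1) fun p q hpq => by
    by_cases hp : p ∈ S <;> by_cases hq : q ∈ S <;> simp only [hp, hq, dite_true, dite_false]
    exacts [commute_of_of hpq, .one_right _, .one_left _, .one_left _]

@[simp] lemma incl_of (S : Set V) (v : S) : incl Γ S (of v) = of v.1 := lift_of ..

@[simp] lemma inclOfLE_of {S T : Set V} (h : S ⊆ T) (v : S) :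
    inclOfLE Γ h (of v) = of ⟨v.1, h v.2⟩ := lift_of ..

lemma restrict_of_mem {S : Set V} {v : V} (hv : v ∈ S) :
    restrict Γ S (of v) = of ⟨v, hv⟩ := by
  simp [restrict, hv]

lemma restrict_of_notMem {S : Set V} {v : V} (hv : v ∉ S) : restrict Γ S (of v) = 1 := by
  simp [restrict, hv]

lemma incl_comp_inclOfLE {S T : Set V} (h : S ⊆ T) :
    (incl Γ T).comp (inclOfLE Γ h) = incl Γ S := by
  ext; simp

lemma restrict_comp_incl (S : Set V) : (restrict Γ S).comp (incl Γ S) = .id _ := by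
  ext v; simp [restrict_of_mem v.2]

lemma incl_injective (S : Set V) : Function.Injective (incl Γ S) :=
  Function.LeftInverse.injective (DFunLike.congr_fun (restrict_comp_incl S))

lemma inclOfLE_injective {S T : Set V} (h : S ⊆ T) : Function.Injective (inclOfLE Γ h) := by
  have := incl_injective (Γ := Γ) S
  rw [← incl_comp_inclOfLE h, MonoidHom.coe_comp] at this
  exact this.of_comp

variable (Γ) in
def special (S : Set V) : Subgroup (RAAG Γ) :=
  Subgroup.closure (of '' S)

lemma of_mem_special {S : Set V} {v : V} (hv : v ∈ S) : of v ∈ special Γ S :=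
  Subgroup.subset_closure ⟨v, hv, rfl⟩

lemma special_eq_range (S : Set V) : special Γ S = (incl Γ S).range := by
  rw [special, MonoidHom.range_eq_map, ← closure_range_of, MonoidHom.map_closure,
    ← Set.range_comp, Set.image_eq_range]
  rfl

@[simp] lemma special_univ : special Γ Set.univ = ⊤ := by
  rw [special, Set.image_univ, closure_range_of]

@[simp] lemma special_empty : special Γ (∅ : Set V) = ⊥ := by
  rw [special, Set.image_empty, Subgroup.closure_empty]

variable (Γ) in
noncomputable def retract (S : Set V) : RAAG Γ →* RAAG Γ :=
  (incl Γ S).comp (restrict Γ S)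

lemma retract_eq_self {S : Set V} {g : RAAG Γ} (hg : g ∈ special Γ S) : retract Γ S g = g := by
  obtain ⟨x, rfl⟩ := (special_eq_range S).le hg
  simp [retract, ← MonoidHom.comp_apply (restrict Γ S), restrict_comp_incl]

lemma map_retract_special_le (S T : Set V) :
    (special Γ S).map (retract Γ T) ≤ special Γ (S ∩ T) := by
  rw [special, MonoidHom.map_closure, Subgroup.closure_le]
  rintro _ ⟨_, ⟨v, hv, rfl⟩, rfl⟩
  by_cases hvT : v ∈ T
  · simpa [retract, restrict_of_mem hvT] using of_mem_special (Set.mem_inter hv hvT)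
  · simp [retract, restrict_of_notMem hvT]

lemma special_inf_special (S T : Set V) : special Γ S ⊓ special Γ T = special Γ (S ∩ T) := by
  refine le_antisymm (fun g hg => ?_) (le_inf ?_ ?_)
  · obtain ⟨hS, hT⟩ := Subgroup.mem_inf.1 hg
    exact retract_eq_self hT ▸ map_retract_special_le S T (Subgroup.mem_map_of_mem _ hS)
  · exact Subgroup.closure_mono (Set.image_mono Set.inter_subset_left)
  · exact Subgroup.closure_mono (Set.image_mono Set.inter_subset_right)

open scoped Classical in
noncomputable def expHom (u : V) : RAAG Γ →* Multiplicative ℤ :=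
  lift (fun v => .ofAdd (if v = u then 1 else 0)) fun _ _ _ => .all _ _

noncomputable def exponent (u : V) (g : RAAG Γ) : ℤ :=
  (expHom u g).toAdd

@[simp] lemma exponent_mul (u : V) (g h : RAAG Γ) :
    exponent u (g * h) = exponent u g + exponent u h := by
  simp [exponent]

@[simp] lemma exponent_zpow (u : V) (g : RAAG Γ) (k : ℤ) :
    exponent u (g ^ k) = k * exponent u g := by
  simp [exponent]

@[simp] lemma exponent_inv (u : V) (g : RAAG Γ) : exponent u g⁻¹ = -exponent u g := by
  simp [exponent]

@[simp] lemma exponent_of_self (u : V) : exponent u (of u : RAAG Γ) = 1 := by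
  simp [exponent, expHom]

lemma exponent_of_of_ne {u v : V} (h : v ≠ u) : exponent u (of v : RAAG Γ) = 0 := by
  simp [exponent, expHom, h]

lemma exponent_eq_zero_of_mem_special {S : Set V} {u : V} (hu : u ∉ S) {g : RAAG Γ}
    (hg : g ∈ special Γ S) : exponent u g = 0 := by
  suffices special Γ S ≤ (expHom u).ker by simpa [exponent] using this hg
  rw [special, Subgroup.closure_le]
  rintro _ ⟨v, hv, rfl⟩
  simp [expHom, show v ≠ u from fun h => hu (h ▸ hv)]

lemma expHom_injective [Subsingleton V] (v : V) : Function.Injective (expHom (Γ := Γ) v) := by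
  have : (zpowersHom _ (of v)).comp (expHom (Γ := Γ) v) = .id _ := by
    ext u
    simp [Subsingleton.elim u v, expHom]
  exact Function.LeftInverse.injective (g := zpowersHom _ (of v)) (DFunLike.congr_fun this ·)

open scoped Classical in
noncomputable def toHeisenberg {v w : V} (h : ¬Γ.Adj v w) : RAAG Γ →* Heisenberg :=
  lift (fun u => ⟨if u = v then 1 else 0, if u = w then 1 else 0, 0⟩) fun p q hpq => by
    rw [Heisenberg.commute_iff]
    split_ifs <;> simp_all [SimpleGraph.adj_comm]

lemma toHeisenberg_a {v w : V} (h : ¬Γ.Adj v w) (g : RAAG Γ) : (toHeisenberg h g).a = exponent v g := by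
  have : Heisenberg.aHom.comp (toHeisenberg h) = expHom v := by
    ext u
    simp [toHeisenberg, expHom, Heisenberg.aHom]
  simpa [exponent, Heisenberg.aHom] using congrArg Multiplicative.toAdd (DFunLike.congr_fun this g)

lemma toHeisenberg_b {v w : V} (h : ¬Γ.Adj v w) (g : RAAG Γ) : (toHeisenberg h g).b = exponent w g := by
  have : Heisenberg.bHom.comp (toHeisenberg h) = expHom w := by
    ext u
    simp [toHeisenberg, expHom, Heisenberg.bHom]
  simpa [exponent, Heisenberg.bHom] using congrArg Multiplicative.toAdd (DFunLike.congr_fun this g)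

theorem exponent_mul_exponent_eq_of_commute {v w : V} (h : ¬Γ.Adj v w) {x y : RAAG Γ}
    (hxy : Commute x y) : exponent v x * exponent w y = exponent v y * exponent w x := by
  simpa [toHeisenberg_a h, toHeisenberg_b h] using Heisenberg.commute_iff.1 (hxy.map (toHeisenberg h))

lemma exponent_eq_zero_of_commute_of {v w : V} (hvw : v ≠ w) (h : ¬Γ.Adj v w) {x : RAAG Γ}
    (hx : Commute x (of v)) : exponent w x = 0 := by
  simpa [exponent_of_of_ne hvw] using (exponent_mul_exponent_eq_of_commute h hx).symm

lemma commute_of_mem_special_neighborSet {w : V} {c : RAAG Γ}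
    (hc : c ∈ special Γ (Γ.neighborSet w)) : Commute (of w) c := by
  suffices special Γ (Γ.neighborSet w) ≤ Subgroup.centralizer {of w} from
    (Subgroup.mem_centralizer_singleton_iff.1 (this hc)).symm
  rw [special, Subgroup.closure_le]
  rintro _ ⟨u, hu, rfl⟩
  exact Subgroup.mem_centralizer_singleton_iff.2 (commute_of_of hu).eq.symm

lemma exists_zpow_mul_of_mem_special_insert {w : V} {g : RAAG Γ}
    (hg : g ∈ special Γ (insert w (Γ.neighborSet w))) :
    ∃ k : ℤ, ∃ c ∈ special Γ (Γ.neighborSet w), of w ^ k * c = g := by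
  rw [special, Set.image_insert_eq, Set.insert_eq, Subgroup.closure_union,
    ← Subgroup.zpowers_eq_closure, Subgroup.mem_sup_of_commute] at hg
  · obtain ⟨_, ⟨k, rfl⟩, c, hc, rfl⟩ := hg
    exact ⟨k, c, hc, rfl⟩
  · rintro _ ⟨k, rfl⟩ c hc
    exact (commute_of_mem_special_neighborSet hc).zpow_left k

variable (Γ) in
/-- `RAAG Γ` is the amalgam of `starFactor Γ w false`, the star of `w`, and
`starFactor Γ w true`, the graph without `w`, over the link of `w`. -/
def starFactor (w : V) (b : Bool) : Set V :=
  cond b {w}ᶜ (insert w (Γ.neighborSet w))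

variable (Γ) in
lemma neighborSet_subset_starFactor (w : V) : ∀ b, Γ.neighborSet w ⊆ starFactor Γ w b
  | true => fun _ hu => (Γ.ne_of_adj hu).symm
  | false => Set.subset_insert _ _

variable (Γ) in
abbrev StarAmalgam (w : V) :=
  PushoutI fun b => inclOfLE Γ (neighborSet_subset_starFactor Γ w b)

lemma of_true_eq_of_false {w u : V} (hu : Γ.Adj w u) :
    (PushoutI.of true (of ⟨u, neighborSet_subset_starFactor Γ w true hu⟩) : StarAmalgam Γ w) =
      PushoutI.of false (of ⟨u, neighborSet_subset_starFactor Γ w false hu⟩) := by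
  have h b := inclOfLE_of (Γ := Γ) (neighborSet_subset_starFactor Γ w b) ⟨u, hu⟩
  rw [← h true, ← h false, PushoutI.of_apply_eq_base, PushoutI.of_apply_eq_base]

open scoped Classical in
variable (Γ) in
noncomputable def toStarAmalgam (w : V) : RAAG Γ →* StarAmalgam Γ w :=
  lift (fun v => if h : v = w then PushoutI.of false (of ⟨w, Set.mem_insert w _⟩)
      else PushoutI.of true (of ⟨v, h⟩)) fun p q hpq => by
    by_cases hp : p = w
    · subst hp
      rw [dif_pos rfl, dif_neg (Γ.ne_of_adj hpq).symm, of_true_eq_of_false hpq]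
      exact Commute.map (by exact commute_of_of hpq) _
    by_cases hq : q = w
    · subst hq
      rw [dif_pos rfl, dif_neg hp, of_true_eq_of_false hpq.symm]
      exact (Commute.map (by exact commute_of_of hpq.symm) _).symm
    rw [dif_neg hp, dif_neg hq]
    exact Commute.map (by exact commute_of_of hpq) _

variable (Γ) in
noncomputable def fromStarAmalgam (w : V) : StarAmalgam Γ w →* RAAG Γ :=
  PushoutI.lift (fun b => incl Γ (starFactor Γ w b)) (incl Γ (Γ.neighborSet w))
    fun _ => incl_comp_inclOfLE _

@[simp] lemma fromStarAmalgam_of (w : V) {b : Bool} (y : RAAG (Γ.induce (starFactor Γ w b))) :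
    fromStarAmalgam Γ w (PushoutI.of b y) = incl Γ _ y :=
  PushoutI.lift_of _ _ _ _

lemma fromStarAmalgam_toStarAmalgam (w : V) (g : RAAG Γ) :
    fromStarAmalgam Γ w (toStarAmalgam Γ w g) = g := by
  suffices (fromStarAmalgam Γ w).comp (toStarAmalgam Γ w) = .id _ from
    DFunLike.congr_fun this g
  ext v
  by_cases hv : v = w
  · subst hv; simp [toStarAmalgam, fromStarAmalgam]
  · simp [toStarAmalgam, fromStarAmalgam, hv]

lemma toStarAmalgam_of_self (w : V) :
    toStarAmalgam Γ w (of w) = PushoutI.of false (of ⟨w, Set.mem_insert w _⟩) := by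
  simp [toStarAmalgam]

lemma toStarAmalgam_incl (w : V) (d : RAAG (Γ.induce (Γ.neighborSet w))) :
    toStarAmalgam Γ w (incl Γ _ d) =
      PushoutI.of false (inclOfLE Γ (neighborSet_subset_starFactor Γ w false) d) := by
  rw [← MonoidHom.comp_apply, ← MonoidHom.comp_apply]
  congr 1
  ext ⟨u, hu⟩
  simp [toStarAmalgam, (Γ.ne_of_adj hu).symm, of_true_eq_of_false hu]

/-- A special case of Servatius' centralizer theorem. -/
theorem mem_special_insert_of_commute {w : V} {δ g : RAAG Γ}
    (hδ : δ ∈ special Γ (Γ.neighborSet w)) (hg : Commute g (of w * δ)) :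
    g ∈ special Γ (insert w (Γ.neighborSet w)) := by
  obtain ⟨d, rfl⟩ := (special_eq_range _).le hδ
  let φ := inclOfLE Γ (neighborSet_subset_starFactor Γ w false)
  let x : RAAG (Γ.induce (starFactor Γ w false)) := of ⟨w, Set.mem_insert w _⟩ * φ d
  have hx : toStarAmalgam Γ w (of w * incl Γ _ d) = PushoutI.of false x := by
    rw [map_mul, toStarAmalgam_of_self, toStarAmalgam_incl, map_mul]
  -- `x` has `w`-exponent `1`, while the amalgamated subgroup has `w`-exponent `0`
  have hconj : ∀ c, c * x * c⁻¹ ∉ φ.range := by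
    rintro c ⟨y, hy⟩
    have hφ z : exponent w (incl Γ _ (φ z)) = 0 := by
      rw [← MonoidHom.comp_apply, incl_comp_inclOfLE]
      exact exponent_eq_zero_of_mem_special Γ.notMem_neighborSet_self
        ((special_eq_range _).ge ⟨z, rfl⟩)
    have h := congrArg (exponent w ∘ incl Γ _) hy
    simp [x, hφ] at h
  obtain ⟨y, hy⟩ := PushoutI.mem_range_of_commute (fun _ => inclOfLE_injective _) hconj
    (hx ▸ hg.map (toStarAmalgam Γ w))
  rw [← fromStarAmalgam_toStarAmalgam w g, ← hy, special_eq_range]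
  exact ⟨y, (fromStarAmalgam_of w y).symm⟩

theorem mem_special_neighborSet_of_commute {w : V} {δ g : RAAG Γ}
    (hδ : δ ∈ special Γ (Γ.neighborSet w)) (hg : Commute g (of w * δ))
    (hw : exponent w g = 0) : g ∈ special Γ (Γ.neighborSet w) := by
  obtain ⟨k, c, hc, rfl⟩ := exists_zpow_mul_of_mem_special_insert (mem_special_insert_of_commute hδ hg)
  have hk : k = 0 := by
    simpa [exponent_eq_zero_of_mem_special Γ.notMem_neighborSet_self hc] using hw
  simpa [hk] using hc

theorem eq_one_of_forall_commute [Finite V] {z : RAAG Γ} (hz : ∀ u, exponent u z = 0)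
    (hcomm : ∀ w, ∃ δ ∈ special Γ (Γ.neighborSet w), Commute z (of w * δ)) : z = 1 := by
  suffices ∀ S : Set V, z ∈ special Γ S → z = 1 from this Set.univ (by simp)
  intro S
  induction S using WellFoundedLT.induction with
  | _ S ih =>
    intro hS
    obtain rfl | ⟨w, hw⟩ := S.eq_empty_or_nonempty
    · simpa using hS
    obtain ⟨δ, hδ, hzδ⟩ := hcomm w
    refine ih (S ∩ Γ.neighborSet w) ?_ ?_
    · exact Set.inter_ssubset_left_iff.2 fun h => Γ.notMem_neighborSet_self (h hw)
    · rw [← special_inf_special]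
      exact ⟨hS, mem_special_neighborSet_of_commute hδ hzδ (hz w)⟩

lemma eq_top_of_forall_of_mem {A : Subgroup (RAAG Γ)} (hA : ∀ v, of v ∈ A) : A = ⊤ := by
  rw [eq_top_iff, ← closure_range_of, Subgroup.closure_le]
  exact Set.range_subset_iff.2 hA

section Splitting

variable {a b : V → RAAG Γ}

lemma commute_left_of (hc : ∀ v w, Commute (a v) (b w)) (hab : ∀ v, a v * b v = of v)
    (v : V) : Commute (a v) (of v) :=
  hab v ▸ (Commute.refl _).mul_right (hc v v)

lemma commute_right_of (hc : ∀ v w, Commute (a v) (b w)) (hab : ∀ v, a v * b v = of v)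
    (v : V) : Commute (b v) (of v) :=
  hab v ▸ (hc v v).symm.mul_right (Commute.refl _)

lemma exponent_left_add_exponent_right (hab : ∀ v, a v * b v = of v) (v : V) :
    exponent v (a v) + exponent v (b v) = 1 := by
  rw [← exponent_mul, hab, exponent_of_self]

lemma exponent_right_eq_zero_of_compl_adj (hc : ∀ v w, Commute (a v) (b w))
    (hab : ∀ v, a v * b v = of v) {u w : V} (hu : exponent u (a u) ≠ 0) (huw : Γᶜ.Adj u w) :
    exponent w (b w) = 0 := by
  obtain ⟨hne, hadj⟩ := (SimpleGraph.compl_adj _ _ _).1 huw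
  have h := exponent_mul_exponent_eq_of_commute hadj (hc u w)
  rw [exponent_eq_zero_of_commute_of hne.symm (mt Γ.adj_symm hadj) (commute_right_of hc hab w),
    exponent_eq_zero_of_commute_of hne hadj (commute_left_of hc hab u), zero_mul] at h
  exact (mul_eq_zero.1 h).resolve_left hu

lemma exponent_right_eq_zero [Nontrivial V] (hΓ : Γᶜ.Connected) (hc : ∀ v w, Commute (a v) (b w))
    (hab : ∀ v, a v * b v = of v) {v₀ : V} (h₀ : exponent v₀ (a v₀) ≠ 0) (w : V) :
    exponent w (b w) = 0 := by
  have hP (u : V) : exponent u (a u) ≠ 0 := by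
    obtain ⟨p⟩ := hΓ.preconnected v₀ u
    induction p with
    | nil => exact h₀
    | @cons _ v _ hadj _ ih =>
      have h := exponent_left_add_exponent_right hab v
      rw [exponent_right_eq_zero_of_compl_adj hc hab h₀ hadj] at h
      exact ih (by omega)
  obtain ⟨u, hu⟩ := hΓ.preconnected.exists_adj_of_nontrivial w
  exact exponent_right_eq_zero_of_compl_adj hc hab (hP u) hu.symm

lemma exponent_eq_zero_of_forall_commute [Nontrivial V] (hΓ : Γᶜ.Connected)
    (hc : ∀ v w, Commute (a v) (b w)) (hab : ∀ v, a v * b v = of v)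
    (hb : ∀ v, exponent v (b v) = 0) {g : RAAG Γ} (hg : ∀ v, Commute (a v) g) (w : V) :
    exponent w g = 0 := by
  obtain ⟨u, hu⟩ := hΓ.preconnected.exists_adj_of_nontrivial w
  obtain ⟨hne, hadj⟩ := (SimpleGraph.compl_adj _ _ _).1 hu.symm
  have h := exponent_mul_exponent_eq_of_commute hadj (hg u)
  have hau : exponent u (a u) = 1 := by
    simpa [hb u] using exponent_left_add_exponent_right hab u
  rwa [hau, one_mul, exponent_eq_zero_of_commute_of hne hadj (commute_left_of hc hab u),
    mul_zero] at h

theorem right_eq_one_of_exponent_ne_zero [Finite V] [Nontrivial V] (hΓ : Γᶜ.Connected)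
    (hc : ∀ v w, Commute (a v) (b w)) (hab : ∀ v, a v * b v = of v) {v₀ : V}
    (h₀ : exponent v₀ (a v₀) ≠ 0) (v : V) : b v = 1 := by
  have hb := exponent_right_eq_zero hΓ hc hab h₀
  refine eq_one_of_forall_commute (exponent_eq_zero_of_forall_commute hΓ hc hab hb
    fun w => hc w v) fun w => ⟨(b w)⁻¹, ?_, ?_⟩
  · refine inv_mem (mem_special_neighborSet_of_commute (one_mem _) ?_ (hb w))
    simpa using commute_right_of hc hab w
  · rw [← hab w, mul_inv_cancel_right]
    exact (hc w v).symm

end Splitting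

theorem eq_bot_or_eq_bot_of_connected_compl [Finite V] (hΓ : Γᶜ.Connected)
    {A B : Subgroup (RAAG Γ)} (hcomm : ∀ a ∈ A, ∀ b ∈ B, Commute a b) (hinf : A ⊓ B = ⊥)
    (hsup : A ⊔ B = ⊤) : A = ⊥ ∨ B = ⊥ := by
  obtain ⟨v₀⟩ := hΓ.nonempty
  cases subsingleton_or_nontrivial V
  · exact Subgroup.eq_bot_or_eq_bot_of_injective_int (expHom_injective v₀) hinf
  choose a ha b hb hab using fun v =>
    (Subgroup.mem_sup_of_commute hcomm).1 (hsup ▸ Subgroup.mem_top (of v : RAAG Γ))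
  have hc v w : Commute (a v) (b w) := hcomm _ (ha v) _ (hb w)
  by_cases h : ∃ v, exponent v (a v) ≠ 0
  · obtain ⟨v₁, h₁⟩ := h
    have hA : A = ⊤ := eq_top_of_forall_of_mem fun v => by
      simpa [← hab v, right_eq_one_of_exponent_ne_zero hΓ hc hab h₁ v] using ha v
    exact .inr (by rwa [hA, top_inf_eq] at hinf)
  · simp only [not_exists, not_not] at h
    have hba v : b v * a v = of v := (hc v v).eq ▸ hab v
    have h₁ : exponent v₀ (b v₀) ≠ 0 := by
      have := exponent_left_add_exponent_right hab v₀
      rw [h v₀] at this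
      omega
    have hB : B = ⊤ := eq_top_of_forall_of_mem fun v => by
      simpa [← hba v, right_eq_one_of_exponent_ne_zero hΓ (fun v w => (hc w v).symm) hba h₁ v]
        using hb v
    exact .inl (by rwa [hB, inf_top_eq] at hinf)

end RAAG

namespace VTG

/-- `PresentedGroup (raagRels n)` is `RAAG (disjGraph n)` by definition. -/
def disjGraph (n : ℕ) : SimpleGraph (Vtx n) where
  Adj := DisjV
  symm := ⟨fun _ _ h => ⟨h.1.symm, h.2.2.1.symm, h.2.1.symm, h.2.2.2.symm⟩⟩
  loopless := ⟨fun _ h => h.1 rfl⟩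

lemma exists_vtx {n : ℕ} {i j : Fin n} (h : i ≠ j) :
    ∃ c : Vtx n, (c.1.1 = i ∧ c.1.2 = j) ∨ (c.1.1 = j ∧ c.1.2 = i) := by
  rcases h.lt_or_gt with h | h
  exacts [⟨⟨(i, j), h⟩, .inl ⟨rfl, rfl⟩⟩, ⟨⟨(j, i), h⟩, .inr ⟨rfl, rfl⟩⟩]

lemma connected_compl_disjGraph {n : ℕ} (hn : 2 ≤ n) : (disjGraph n)ᶜ.Connected where
  nonempty := ⟨⟨(⟨0, by omega⟩, ⟨1, by omega⟩), Fin.mk_lt_mk.2 one_pos⟩⟩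
  preconnected u w := by
    by_cases huw : u = w
    · exact huw ▸ .refl _
    by_cases hd : DisjV u w
    -- disjoint `{i, j}` and `{k, l}` both meet `{j, k}`
    · obtain ⟨c, hc⟩ := exists_vtx hd.2.2.1
      have hcompl {x y : Vtx n} (hne : x.1 ≠ y.1) (hxy : ¬DisjV x y) : (disjGraph n)ᶜ.Adj x y :=
        (SimpleGraph.compl_adj _ _ _).2 ⟨fun h => hne (congrArg Subtype.val h), hxy⟩
      have hu : (disjGraph n)ᶜ.Adj u c := hcompl (by grind) (by grind)
      have hw : (disjGraph n)ᶜ.Adj c w := hcompl (by grind) (by grind)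
      exact hu.reachable.trans hw.reachable
    · exact SimpleGraph.Adj.reachable ((SimpleGraph.compl_adj _ _ _).2 ⟨huw, hd⟩)

/-- `PVT_n` is an irreducible right-angled Artin group: it is not an (internal) direct
product of two nontrivial subgroups. -/
theorem pvt_irreducible (n : ℕ) (hn : 2 ≤ n)
    (A B : Subgroup (PresentedGroup (raagRels n)))
    (hcomm : ∀ a ∈ A, ∀ b ∈ B, a * b = b * a)
    (hinf : A ⊓ B = ⊥) (hsup : A ⊔ B = ⊤) :
    A = ⊥ ∨ B = ⊥ :=
  RAAG.eq_bot_or_eq_bot_of_connected_compl (connected_compl_disjGraph hn) hcomm hinf hsup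

end VTG
end
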